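/- arXiv:2505.10362 — 6 statements merged into one kernel-verified Lean document; each statement's English description precedes it below -/
import Mathlib

section
/- Let q be a power of an odd prime p and n ≥ 1. Every non-degenerate hermitian form on an n-dimensional F_{q^2}-vector space is isomorphic to the standard one. Equivalently, in matrix terms: for every invertible n×n matrix M over F_{q^2} satisfying conj(M)ᵀ = M (where conj is the entrywise q-power map), there exists A ∈ GL_n(F_{q^2}) such that conj(A)ᵀ · M · A = 1_n. -/
/-!
Write `σ x = x ^ q`. On a field with `q ^ 2` elements this is an involutive automorphism which
moves some element, and whose norm `a ↦ σ a * a` hits every nonzero fixed element, because the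
unit group is cyclic of order `(q + 1) * (q - 1)`. For any such `σ`, an invertible `σ`-hermitian
matrix is congruent to one with a diagonal entry `1`: if all diagonal entries vanish, a
transvection creates a nonzero one (`x ↦ x + σ x` is not identically zero), and the norm rescales
it to `1`. Clearing its row and column (a Schur complement) splits off a `1 × 1` block, and
induction on the size finishes.
-/

open Matrix

theorem RingHom.exists_add_apply_ne_zero {R : Type*} [CommRing R] {σ : R →+* R}
    (hmove : ∃ a, σ a ≠ a) : ∃ x, x + σ x ≠ 0 := by
  obtain ⟨a, ha⟩ := hmove
  by_contra! h
  have two_eq_zero : (1 : R) + 1 = 0 := by simpa using h 1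
  exact ha (by linear_combination h a - a * two_eq_zero)

namespace Matrix

section IsSesqCongr

variable {R : Type*} [CommRing R] (σ : R →+* R) {m n : Type*}
  [Fintype m] [Fintype n] [DecidableEq m] [DecidableEq n]

def IsSesqCongr (M N : Matrix n n R) : Prop :=
  ∃ A : Matrix n n R, IsUnit A ∧ (A.map σ)ᵀ * M * A = N

variable {σ}

theorem IsSesqCongr.refl (M : Matrix n n R) : IsSesqCongr σ M M :=
  ⟨1, isUnit_one, by simp⟩

theorem IsSesqCongr.trans {M N P : Matrix n n R} :
    IsSesqCongr σ M N → IsSesqCongr σ N P → IsSesqCongr σ M P := by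
  rintro ⟨A, hA, rfl⟩ ⟨B, hB, rfl⟩
  refine ⟨A * B, hA.mul hB, ?_⟩
  simp only [Matrix.map_mul, transpose_mul, Matrix.mul_assoc]

theorem IsSesqCongr.isUnit {M N : Matrix n n R} (h : IsSesqCongr σ M N) (hM : IsUnit M) :
    IsUnit N := by
  obtain ⟨A, hA, rfl⟩ := h
  have hAσ : IsUnit (A.map σ)ᵀ := by
    rw [isUnit_transpose, isUnit_iff_isUnit_det, ← RingHom.mapMatrix_apply, ← RingHom.map_det]
    exact ((isUnit_iff_isUnit_det A).1 hA).map σ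
  exact (hAσ.mul hM).mul hA

theorem IsSesqCongr.map_transpose_eq {M N : Matrix n n R} (h : IsSesqCongr σ M N)
    (hσ : Function.Involutive σ) (hM : (M.map σ)ᵀ = M) : (N.map σ)ᵀ = N := by
  obtain ⟨A, -, rfl⟩ := h
  have hAA : ((A.map σ)ᵀ.map σ)ᵀ = A := by ext; simp [hσ _]
  simp only [Matrix.map_mul, transpose_mul, hAA, hM, Matrix.mul_assoc]

theorem IsSesqCongr.reindex {M N : Matrix m m R} (e : m ≃ n) (h : IsSesqCongr σ M N) :
    IsSesqCongr σ (Matrix.reindex e e M) (Matrix.reindex e e N) := by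
  obtain ⟨A, hA, rfl⟩ := h
  refine ⟨Matrix.reindex e e A, ?_, ?_⟩
  · exact (isUnit_submatrix_equiv _ _).2 hA
  · simp only [reindex_apply, ← submatrix_map, transpose_submatrix, submatrix_mul_equiv]

theorem isSesqCongr_reindex_iff {M N : Matrix m m R} (e : m ≃ n) :
    IsSesqCongr σ (reindex e e M) (reindex e e N) ↔ IsSesqCongr σ M N := by
  refine ⟨fun h => ?_, IsSesqCongr.reindex e⟩
  simpa using h.reindex e.symm

theorem IsSesqCongr.fromBlocks {M₁ N₁ : Matrix m m R} {M₂ N₂ : Matrix n n R}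
    (h₁ : IsSesqCongr σ M₁ N₁) (h₂ : IsSesqCongr σ M₂ N₂) :
    IsSesqCongr σ (Matrix.fromBlocks M₁ 0 0 M₂) (Matrix.fromBlocks N₁ 0 0 N₂) := by
  obtain ⟨A₁, hA₁, rfl⟩ := h₁
  obtain ⟨A₂, hA₂, rfl⟩ := h₂
  refine ⟨Matrix.fromBlocks A₁ 0 0 A₂, ?_, ?_⟩
  · simp only [isUnit_iff_isUnit_det, det_fromBlocks_zero₂₁] at hA₁ hA₂ ⊢
    exact hA₁.mul hA₂
  · simp [fromBlocks_map, fromBlocks_transpose, fromBlocks_multiply]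

theorem isSesqCongr_fromBlocks_one (hσ : Function.Involutive σ)
    (A : Matrix m m R) (B : Matrix m n R) :
    IsSesqCongr σ (fromBlocks A B (B.map σ)ᵀ 1) (fromBlocks (A - B * (B.map σ)ᵀ) 0 0 1) := by
  refine ⟨fromBlocks 1 0 (-(B.map σ)ᵀ) 1, ?_, ?_⟩
  · simp [isUnit_iff_isUnit_det]
  · have hBB : ((B.map σ)ᵀ.map σ)ᵀ = B := by ext; simp [hσ _]
    simp [fromBlocks_map, fromBlocks_transpose, fromBlocks_multiply, hBB, Matrix.map_neg,
      sub_eq_add_neg]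

end IsSesqCongr

variable {F : Type*} [Field F] {σ : F →+* F} {n : Type*} [DecidableEq n]

theorem map_transvection_transpose (i j : n) (c : F) :
    ((transvection i j c).map σ)ᵀ = transvection j i (σ c) := by
  simp [transvection, Matrix.map_add, transpose_add]

variable [Fintype n]

theorem exists_isSesqCongr_apply_self_ne_zero (hmove : ∃ a, σ a ≠ a) {M : Matrix n n F}
    (hM : (M.map σ)ᵀ = M) (hM0 : M ≠ 0) : ∃ N i, IsSesqCongr σ M N ∧ N i i ≠ 0 := by
  by_cases hdiag : ∃ i, M i i ≠ 0
  · obtain ⟨i, hi⟩ := hdiag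
    exact ⟨M, i, .refl M, hi⟩
  push Not at hdiag
  obtain ⟨i, j, hij⟩ : ∃ i j, M i j ≠ 0 := by
    by_contra! h
    exact hM0 (Matrix.ext h)
  have hne : i ≠ j := by rintro rfl; exact hij (hdiag i)
  obtain ⟨x, hx⟩ := σ.exists_add_apply_ne_zero hmove
  have hji : M j i = σ (M i j) := (congrFun₂ hM j i).symm
  -- the column `eᵢ + t eⱼ` with `t = x / Mᵢⱼ` has self-pairing `x + σ x`
  refine ⟨_, i, ⟨transvection j i (x * (M i j)⁻¹), ?_, rfl⟩, ?_⟩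
  · rw [isUnit_iff_isUnit_det, det_transvection_of_ne _ _ hne.symm]
    exact isUnit_one
  · rw [map_transvection_transpose, Matrix.mul_assoc, transvection_mul_apply_same,
      mul_transvection_apply_same, mul_transvection_apply_same, hdiag, hdiag, hji,
      mul_zero, zero_add, add_zero, ← map_mul, inv_mul_cancel_right₀ hij]
    exact hx

theorem exists_isSesqCongr_apply_self_eq_one
    (hnorm : ∀ c, c ≠ 0 → σ c = c → ∃ a, σ a * a = c) {M : Matrix n n F}
    (hM : (M.map σ)ᵀ = M) {i : n} (hi : M i i ≠ 0) : ∃ N, IsSesqCongr σ M N ∧ N i i = 1 := by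
  have hfix : σ (M i i) = M i i := congrFun₂ hM i i
  obtain ⟨a, ha⟩ := hnorm (M i i)⁻¹ (inv_ne_zero hi) (by rw [map_inv₀, hfix])
  have ha0 : a ≠ 0 := by
    rintro rfl
    exact hi (by simpa using ha.symm)
  refine ⟨_, ⟨diagonal fun _ => a, ?_, rfl⟩, ?_⟩
  · exact isUnit_diagonal.2 (Pi.isUnit_iff.2 fun _ => ha0.isUnit)
  · simp only [diagonal_map (map_zero σ), diagonal_transpose, diagonal_mul, mul_diagonal]
    rw [mul_right_comm, ha, inv_mul_cancel₀ hi]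

theorem exists_isSesqCongr_fromBlocks_one {m : Type*} [Fintype m] [DecidableEq m]
    (hσ : Function.Involutive σ) {M : Matrix (m ⊕ Unit) (m ⊕ Unit) F} (hM : IsUnit M)
    (hMh : (M.map σ)ᵀ = M) (h1 : M (.inr ()) (.inr ()) = 1) :
    ∃ S : Matrix m m F, IsUnit S ∧ (S.map σ)ᵀ = S ∧ IsSesqCongr σ M (fromBlocks S 0 0 1) := by
  have h21 : toBlocks₂₁ M = ((toBlocks₁₂ M).map σ)ᵀ := by
    ext i j
    exact (congrFun₂ hMh (.inr i) (.inl j)).symm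
  have h22 : toBlocks₂₂ M = 1 := by
    ext ⟨⟩ ⟨⟩
    exact h1
  obtain ⟨A, B, rfl⟩ : ∃ A B, M = fromBlocks A B (B.map σ)ᵀ 1 :=
    ⟨_, _, by rw [← h21, ← h22, fromBlocks_toBlocks]⟩
  have hMS := isSesqCongr_fromBlocks_one hσ A B
  refine ⟨_, ?_, ?_, hMS⟩
  · have := hMS.isUnit hM
    rwa [isUnit_iff_isUnit_det, det_fromBlocks_zero₂₁, det_one, mul_one,
      ← isUnit_iff_isUnit_det] at this
  · have := congrArg toBlocks₁₁ (hMS.map_transpose_eq hσ hMh)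
    simpa [fromBlocks_map, fromBlocks_transpose] using this

theorem isSesqCongr_one_of_isUnit (hσ : Function.Involutive σ) (hmove : ∃ a, σ a ≠ a)
    (hnorm : ∀ c, c ≠ 0 → σ c = c → ∃ a, σ a * a = c) :
    ∀ {k : ℕ} (M : Matrix (Fin k) (Fin k) F), IsUnit M → (M.map σ)ᵀ = M → IsSesqCongr σ M 1
  | 0, M, _, _ => Subsingleton.elim M 1 ▸ .refl M
  | k + 1, M, hM, hMh => by
    obtain ⟨N, i, hMN, hNi⟩ := exists_isSesqCongr_apply_self_ne_zero hmove hMh hM.ne_zero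
    obtain ⟨P, hNP, hPi⟩ :=
      exists_isSesqCongr_apply_self_eq_one hnorm (hMN.map_transpose_eq hσ hMh) hNi
    have hMP := hMN.trans hNP
    let e : Fin (k + 1) ≃ Fin k ⊕ Unit := (finSuccEquiv' i).trans (Equiv.optionEquivSumPUnit _)
    obtain ⟨S, hS, hSh, hPS⟩ := exists_isSesqCongr_fromBlocks_one hσ (M := reindex e e P)
      ((isUnit_submatrix_equiv _ _).2 (hMP.isUnit hM))
      (congrArg (reindex e e) (hMP.map_transpose_eq hσ hMh)) (by simpa [e] using hPi)
    have hS1 := hPS.trans ((isSesqCongr_one_of_isUnit hσ hmove hnorm S hS hSh).fromBlocks (.refl 1))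
    rw [fromBlocks_one, ← submatrix_one_equiv e.symm, ← reindex_apply,
      isSesqCongr_reindex_iff] at hS1
    exact hMP.trans hS1

end Matrix

theorem IsCyclic.exists_pow_eq_of_pow_eq_one {G : Type*} [CommGroup G] [IsCyclic G] [Finite G]
    {a b : ℕ} (hab : Nat.card G = a * b) {x : G} (hx : x ^ b = 1) : ∃ y, y ^ a = x := by
  have hle : (powMonoidHom a : G →* G).range ≤ (powMonoidHom b).ker := by
    rintro _ ⟨y, rfl⟩
    simp [← pow_mul, ← hab, pow_card_eq_one']
  have ha : 0 < a := Nat.pos_of_mul_pos_right (hab ▸ Nat.card_pos)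
  have hcard :
      Nat.card (powMonoidHom b : G →* G).ker ≤ Nat.card (powMonoidHom a : G →* G).range := by
    rw [IsCyclic.card_powMonoidHom_ker, IsCyclic.card_powMonoidHom_range, hab,
      Nat.gcd_eq_right (dvd_mul_left b a), Nat.gcd_eq_right (dvd_mul_right a b),
      Nat.mul_div_cancel_left b ha]
  suffices x ∈ (powMonoidHom a : G →* G).range from this
  rwa [Subgroup.eq_of_le_of_card_ge hle hcard]

namespace FiniteField

variable {F : Type*} [Field F] [Fintype F] {q : ℕ}

theorem exists_ringHom_eq_pow (hq : q ∣ Fintype.card F) : ∃ σ : F →+* F, ∀ x, σ x = x ^ q := by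
  obtain ⟨k, hp, hk⟩ := FiniteField.card F (ringChar F)
  obtain ⟨j, -, rfl⟩ := (Nat.dvd_prime_pow hp).1 (hk ▸ hq)
  have : Fact (ringChar F).Prime := ⟨hp⟩
  exact ⟨iterateFrobenius F (ringChar F) j, iterateFrobenius_def _ _⟩

open Polynomial in
theorem exists_pow_ne_self (hq : 1 < q) (hqF : q < Fintype.card F) : ∃ x : F, x ^ q ≠ x := by
  by_contra! h
  have hroots : (Finset.univ : Finset F).val ⊆ (X ^ q - X : F[X]).roots := fun x _ => by
    simp [mem_roots (X_pow_card_sub_X_ne_zero F hq), h x]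
  have := card_le_degree_of_subset_roots hroots
  rw [X_pow_card_sub_X_natDegree_eq F hq, Finset.card_univ] at this
  omega

theorem exists_pow_mul_self_eq (hF : Fintype.card F = q ^ 2) {c : F} (hc : c ≠ 0)
    (hcq : c ^ q = c) : ∃ a : F, a ^ q * a = c := by
  have hq : q ≠ 0 := by rintro rfl; simp at hF
  have hcard : Nat.card Fˣ = (q + 1) * (q - 1) := by
    rw [Nat.card_units, Nat.card_eq_fintype_card, hF, ← Nat.sq_sub_sq, one_pow]
  have hfix : Units.mk0 c hc ^ (q - 1) = 1 := by
    rw [← mul_eq_right (b := Units.mk0 c hc), pow_sub_one_mul hq]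
    exact Units.ext (by simpa using hcq)
  obtain ⟨y, hy⟩ := IsCyclic.exists_pow_eq_of_pow_eq_one hcard hfix
  exact ⟨y, by rw [← pow_succ, ← Units.val_pow_eq_pow_val, hy, Units.val_mk0]⟩

end FiniteField

theorem hermitian_forms_isomorphic_to_standard_general
    (q : ℕ)
    (F : Type) [Field F] [Fintype F] (hF : Fintype.card F = q ^ 2)
    (n : ℕ)
    (M : Matrix (Fin n) (Fin n) F) (hM : IsUnit M)
    (hherm : (M.map fun x => x ^ q)ᵀ = M) :
    ∃ A : Matrix (Fin n) (Fin n) F, IsUnit A ∧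
      (A.map fun x => x ^ q)ᵀ * M * A = 1 := by
  have hq : 1 < q := (Nat.one_lt_pow_iff two_ne_zero).1 (hF ▸ Fintype.one_lt_card)
  obtain ⟨σ, hσq⟩ := FiniteField.exists_ringHom_eq_pow (hF ▸ dvd_pow_self q two_ne_zero)
  have hσ : Function.Involutive σ := fun x => by
    rw [hσq, hσq, ← pow_mul, ← sq, ← hF, FiniteField.pow_card]
  have hmove : ∃ a, σ a ≠ a := by
    simpa only [hσq] using FiniteField.exists_pow_ne_self hq (hF ▸ lt_self_pow₀ hq one_lt_two)
  have hnorm : ∀ c, c ≠ 0 → σ c = c → ∃ a, σ a * a = c := by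
    simpa only [hσq] using fun c => FiniteField.exists_pow_mul_self_eq hF (c := c)
  rw [← funext hσq] at hherm ⊢
  exact isSesqCongr_one_of_isUnit hσ hmove hnorm M hM hherm

/-- Let `q` be a power of an odd prime and `n ≥ 1`.  Every
non-degenerate hermitian form on an `n`-dimensional `F_{q^2}`-vector space is
isomorphic to the standard one: for every invertible `n × n` matrix `M` over a
field `F` with `q^2` elements satisfying `conj(M)ᵀ = M` (where `conj` raises
every entry to the `q`-th power), there is `A ∈ GL_n(F)` with
`conj(A)ᵀ * M * A = 1`. -/
theorem hermitian_forms_isomorphic_to_standard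
    (p m q : ℕ) (hp : Nat.Prime p) (hodd : p ≠ 2) (hm : 1 ≤ m) (hq : q = p ^ m)
    (F : Type) [Field F] [Fintype F] (hF : Fintype.card F = q ^ 2)
    (n : ℕ) (hn : 1 ≤ n)
    (M : Matrix (Fin n) (Fin n) F) (hM : IsUnit M)
    (hherm : (M.map fun x => x ^ q)ᵀ = M) :
    ∃ A : Matrix (Fin n) (Fin n) F, IsUnit A ∧
      (A.map fun x => x ^ q)ᵀ * M * A = 1 :=
  hermitian_forms_isomorphic_to_standard_general q F hF n M hM hherm
end

section
/- Let q be a power of a prime p, let F̄ be an algebraic closure of F_p, and let n ≥ 1. Let K be the n×n matrix with 1's on the antidiagonal and 0's elsewhere, let J be the 2n×2n matrix with blocks [[0, K],[−K, 0]], and let ẏ be the 2n×2n matrix with blocks [[0, 1_n],[−1_n, 0]]. Consider the group Π of all block-diagonal matrices M = diag(A,B) ∈ GL_{2n}(F̄) (with A, B of size n×n) satisfying MᵀJM = J and M = ẏ·M^{(q)}·ẏ⁻¹. Then the map M = diag(A,B) ↦ A is a group isomorphism from Π onto the finite unitary group U_n(F_q) = {A ∈ GL_n(F_{q^2}) : A†A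 = 1_n}, where (A†)_{ij} = (A_{n+1−j, n+1−i})^q. -/
open Matrix

/-- An algebraic closure of `F_p`. -/
abbrev Fbar (p : ℕ) [Fact p.Prime] : Type := AlgebraicClosure (ZMod p)

/-- The `n × n` matrix `K` with `1`'s on the antidiagonal and `0`'s elsewhere. -/
noncomputable def antidiagK (p : ℕ) [Fact p.Prime] (n : ℕ) : Matrix (Fin n) (Fin n) (Fbar p) :=
  Matrix.of fun i j => if (i : ℕ) + 1 + ((j : ℕ) + 1) = n + 1 then 1 else 0

/-- The alternating form `J = [[0, K], [−K, 0]]` defining `Sp_{2n}`. -/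
noncomputable def sympJ (p : ℕ) [Fact p.Prime] (n : ℕ) :
    Matrix (Fin n ⊕ Fin n) (Fin n ⊕ Fin n) (Fbar p) :=
  Matrix.fromBlocks 0 (antidiagK p n) (-(antidiagK p n)) 0

/-- The matrix `ẏ = [[0, 1_n], [−1_n, 0]]`. -/
noncomputable def ydot (p : ℕ) [Fact p.Prime] (n : ℕ) :
    Matrix (Fin n ⊕ Fin n) (Fin n ⊕ Fin n) (Fbar p) :=
  Matrix.fromBlocks 0 1 (-1) 0

/-- `A† : (A†)_{ij} = (A_{n+1−j, n+1−i})^q` (conjugate-transpose along the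
antidiagonal, with conjugation `x ↦ x^q`). -/
noncomputable def dagger (p : ℕ) [Fact p.Prime] (q n : ℕ) (A : Matrix (Fin n) (Fin n) (Fbar p)) :
    Matrix (Fin n) (Fin n) (Fbar p) :=
  Matrix.of fun i j => (A j.rev i.rev) ^ q

/- ===================== auxiliary material ===================== -/

noncomputable def phiHom (p : ℕ) [Fact p.Prime] (e : ℕ) : Fbar p →+* Fbar p :=
  iterateFrobenius (Fbar p) p e

section Aux

variable (p : ℕ) [Fact p.Prime] (e n : ℕ)

lemma phiHom_apply (x : Fbar p) : phiHom p e x = x ^ p ^ e :=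
  iterateFrobenius_def p e x

lemma antidiagK_apply (i j : Fin n) :
    antidiagK p n i j = if j = i.rev then 1 else 0 := by
  have h : ((i : ℕ) + 1 + ((j : ℕ) + 1) = n + 1) ↔ (j = i.rev) := by
    rw [Fin.ext_iff, Fin.val_rev]
    have := i.isLt
    have := j.isLt
    omega
  unfold antidiagK
  simp only [of_apply]
  exact if_congr h rfl rfl

lemma K_mul_apply (M : Matrix (Fin n) (Fin n) (Fbar p)) (i j : Fin n) :
    (antidiagK p n * M) i j = M i.rev j := by
  rw [mul_apply, Finset.sum_eq_single i.rev]
  · rw [antidiagK_apply, if_pos rfl, one_mul]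
  · intro b _ hb
    rw [antidiagK_apply, if_neg hb, zero_mul]
  · intro h; exact absurd (Finset.mem_univ _) h

lemma mul_K_apply (M : Matrix (Fin n) (Fin n) (Fbar p)) (i j : Fin n) :
    (M * antidiagK p n) i j = M i j.rev := by
  rw [mul_apply, Finset.sum_eq_single j.rev]
  · rw [antidiagK_apply, Fin.rev_rev, if_pos rfl, mul_one]
  · intro b _ hb
    rw [antidiagK_apply, if_neg, mul_zero]
    intro h; exact hb (by rw [h, Fin.rev_rev])
  · intro h; exact absurd (Finset.mem_univ _) h

lemma K_mul_K : antidiagK p n * antidiagK p n = 1 := by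
  ext i j
  rw [K_mul_apply, antidiagK_apply, Fin.rev_rev, one_apply]
  exact if_congr eq_comm rfl rfl

lemma K_map : (antidiagK p n).map (phiHom p e) = antidiagK p n := by
  ext i j
  rw [Matrix.map_apply, antidiagK_apply, apply_ite (phiHom p e), _root_.map_one, _root_.map_zero]

lemma map_KXK (X : Matrix (Fin n) (Fin n) (Fbar p)) :
    (antidiagK p n * X * antidiagK p n).map (phiHom p e) =
      antidiagK p n * X.map (phiHom p e) * antidiagK p n := by
  rw [Matrix.map_mul, Matrix.map_mul, K_map]

lemma dagger_eq (A : Matrix (Fin n) (Fin n) (Fbar p)) :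
    dagger p (p ^ e) n A = (antidiagK p n * Aᵀ * antidiagK p n).map (phiHom p e) := by
  ext i j
  rw [Matrix.map_apply, mul_K_apply, K_mul_apply, transpose_apply, phiHom_apply]
  rfl

lemma dagger_one : dagger p (p ^ e) n (1 : Matrix (Fin n) (Fin n) (Fbar p)) = 1 := by
  rw [dagger_eq, transpose_one, Matrix.mul_one, K_mul_K,
    Matrix.map_one _ (map_zero _) (map_one _)]

lemma dagger_mul (A B : Matrix (Fin n) (Fin n) (Fbar p)) :
    dagger p (p ^ e) n (A * B) = dagger p (p ^ e) n B * dagger p (p ^ e) n A := by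
  rw [dagger_eq, dagger_eq, dagger_eq, ← Matrix.map_mul]
  have h : (antidiagK p n * Bᵀ * antidiagK p n) * (antidiagK p n * Aᵀ * antidiagK p n)
      = antidiagK p n * Bᵀ * ((antidiagK p n * antidiagK p n) * (Aᵀ * antidiagK p n)) := by
    simp only [Matrix.mul_assoc]
  rw [transpose_mul, h, K_mul_K, one_mul]
  simp only [Matrix.mul_assoc]

lemma fix_iff (A : Matrix (Fin n) (Fin n) (Fbar p)) :
    (A.map (phiHom p e)).map (phiHom p e) = A ↔
      ∀ i j, A i j ^ (p ^ e) ^ 2 = A i j := by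
  have key : ∀ i j, ((A.map (phiHom p e)).map (phiHom p e)) i j = A i j ^ (p ^ e) ^ 2 := by
    intro i j
    rw [Matrix.map_apply, Matrix.map_apply, phiHom_apply, phiHom_apply, ← pow_mul, ← pow_two]
  rw [← Matrix.ext_iff]
  exact forall₂_congr fun i j => by rw [key]

lemma mapPhi_injective :
    Function.Injective (fun A : Matrix (Fin n) (Fin n) (Fbar p) => A.map (phiHom p e)) := by
  intro A B h
  ext i j
  exact (phiHom p e).injective (by
    have := congrFun (congrFun h i) j
    simpa [Matrix.map_apply] using this)

/-- The block-diagonal embedding `A ↦ diag(A, A^{(q)})` as a monoid hom. -/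
noncomputable def rhoHom :
    Matrix (Fin n) (Fin n) (Fbar p) →*
      Matrix (Fin n ⊕ Fin n) (Fin n ⊕ Fin n) (Fbar p) where
  toFun A := fromBlocks A 0 0 (A.map (phiHom p e))
  map_one' := by
    rw [Matrix.map_one _ (map_zero _) (map_one _)]
    exact fromBlocks_one
  map_mul' A B := by
    rw [fromBlocks_multiply]
    simp [Matrix.map_mul]

noncomputable def psiHom :
    (Matrix (Fin n) (Fin n) (Fbar p))ˣ →*
      (Matrix (Fin n ⊕ Fin n) (Fin n ⊕ Fin n) (Fbar p))ˣ :=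
  Units.map (rhoHom p e n)

lemma rhoHom_apply (A : Matrix (Fin n) (Fin n) (Fbar p)) :
    rhoHom p e n A = fromBlocks A 0 0 (A.map (phiHom p e)) := rfl

lemma psiHom_coe (A : (Matrix (Fin n) (Fin n) (Fbar p))ˣ) :
    ((psiHom p e n A : (Matrix (Fin n ⊕ Fin n) (Fin n ⊕ Fin n) (Fbar p))ˣ) :
        Matrix (Fin n ⊕ Fin n) (Fin n ⊕ Fin n) (Fbar p)) =
      fromBlocks (A : Matrix (Fin n) (Fin n) (Fbar p)) 0 0
        ((A : Matrix (Fin n) (Fin n) (Fbar p)).map (phiHom p e)) := rfl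

lemma psiHom_injective : Function.Injective (psiHom p e n) := by
  intro A B h
  have h1 := congrArg Units.val h
  rw [psiHom_coe, psiHom_coe] at h1
  have h2 := congrArg Matrix.toBlocks₁₁ h1
  rw [toBlocks_fromBlocks₁₁, toBlocks_fromBlocks₁₁] at h2
  exact Units.ext h2

/-- The finite unitary group as a subgroup of `GL_n(F̄)`. -/
noncomputable def Usub : Subgroup (Matrix (Fin n) (Fin n) (Fbar p))ˣ where
  carrier := {A : (Matrix (Fin n) (Fin n) (Fbar p))ˣ | (∀ i j : Fin n,
      ((A : Matrix (Fin n) (Fin n) (Fbar p)) i j) ^ ((p ^ e) ^ 2) =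
        (A : Matrix (Fin n) (Fin n) (Fbar p)) i j) ∧
    dagger p (p ^ e) n (A : Matrix (Fin n) (Fin n) (Fbar p)) *
      (A : Matrix (Fin n) (Fin n) (Fbar p)) = 1}
  one_mem' := by
    constructor
    · intro i j
      rw [Units.val_one]
      rw [one_apply]
      split
      · rw [one_pow]
      · rw [zero_pow]
        have hp : p.Prime := Fact.out
        exact pow_ne_zero _ (pow_ne_zero _ hp.pos.ne')
    · rw [Units.val_one, dagger_one, one_mul]
  mul_mem' := by
    rintro a b ⟨ha1, ha2⟩ ⟨hb1, hb2⟩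
    rw [Set.mem_setOf_eq, Units.val_mul]
    constructor
    · rw [← fix_iff]
      rw [Matrix.map_mul, Matrix.map_mul, (fix_iff p e n _).mpr ha1,
        (fix_iff p e n _).mpr hb1]
    · rw [dagger_mul, Matrix.mul_assoc,
        ← Matrix.mul_assoc (dagger p (p ^ e) n (a : Matrix (Fin n) (Fin n) (Fbar p))),
        ha2, one_mul, hb2]
  inv_mem' := by
    rintro a ⟨ha1, ha2⟩
    have hdagInv : dagger p (p ^ e) n ((a⁻¹ : (Matrix (Fin n) (Fin n) (Fbar p))ˣ) :
        Matrix (Fin n) (Fin n) (Fbar p)) = (a : Matrix (Fin n) (Fin n) (Fbar p)) := by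
      have h1 : dagger p (p ^ e) n (a : Matrix (Fin n) (Fin n) (Fbar p)) *
          dagger p (p ^ e) n ((a⁻¹ : (Matrix (Fin n) (Fin n) (Fbar p))ˣ) :
            Matrix (Fin n) (Fin n) (Fbar p)) = 1 := by
        rw [← dagger_mul]
        have : ((a⁻¹ : (Matrix (Fin n) (Fin n) (Fbar p))ˣ) :
            Matrix (Fin n) (Fin n) (Fbar p)) * (a : Matrix (Fin n) (Fin n) (Fbar p)) = 1 := by
          rw [← Units.val_mul, inv_mul_cancel, Units.val_one]
        rw [this, dagger_one]
      rw [← Matrix.inv_eq_right_inv h1, Matrix.inv_eq_right_inv ha2]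
    constructor
    · rw [← fix_iff]
      have hfix : ((a : Matrix (Fin n) (Fin n) (Fbar p)).map (phiHom p e)).map (phiHom p e)
          = (a : Matrix (Fin n) (Fin n) (Fbar p)) := (fix_iff p e n _).mpr ha1
      -- use units map along the ring hom mapMatrix
      set Φ : Matrix (Fin n) (Fin n) (Fbar p) →* Matrix (Fin n) (Fin n) (Fbar p) :=
        (((phiHom p e).mapMatrix.comp (phiHom p e).mapMatrix : _ →+* _)).toMonoidHom with hΦ
      have hΦa : Units.map Φ a = a := by
        apply Units.ext
        simpa [hΦ, RingHom.mapMatrix_apply] using hfix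
      have := congrArg (·⁻¹) hΦa
      simp only [← MonoidHom.map_inv] at this
      have hval := congrArg Units.val this
      simpa [hΦ, RingHom.mapMatrix_apply] using hval
    · rw [hdagInv, ← Units.val_mul, mul_inv_cancel, Units.val_one]

lemma ydot_inv : (ydot p n)⁻¹ = -(ydot p n) := by
  apply Matrix.inv_eq_right_inv
  rw [ydot]
  rw [Matrix.mul_neg, fromBlocks_multiply]
  simp [← fromBlocks_one, fromBlocks_neg]

lemma frob_conj (A B : Matrix (Fin n) (Fin n) (Fbar p)) :
    ydot p n * (fromBlocks A 0 0 B).map (phiHom p e) * (ydot p n)⁻¹ =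
      fromBlocks (B.map (phiHom p e)) 0 0 (A.map (phiHom p e)) := by
  rw [ydot_inv, ydot]
  have hmap : (fromBlocks A 0 0 B).map (phiHom p e) =
      fromBlocks (A.map (phiHom p e)) 0 0 (B.map (phiHom p e)) := by
    rw [fromBlocks_map, Matrix.map_zero _ (map_zero _)]
  rw [hmap, Matrix.mul_neg, fromBlocks_multiply, fromBlocks_multiply]
  simp [fromBlocks_neg]

lemma sympJ_cond (A B : Matrix (Fin n) (Fin n) (Fbar p))
    (h1 : Aᵀ * (antidiagK p n * B) = antidiagK p n)
    (h2 : Bᵀ * (antidiagK p n * A) = antidiagK p n) :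
    (fromBlocks A 0 0 B)ᵀ * sympJ p n * (fromBlocks A 0 0 B) = sympJ p n := by
  rw [sympJ, fromBlocks_transpose, fromBlocks_multiply, fromBlocks_multiply]
  simp only [Matrix.zero_mul, Matrix.mul_zero, add_zero, zero_add, Matrix.neg_mul,
    Matrix.mul_neg, Matrix.mul_assoc, Matrix.transpose_zero, neg_zero, h1, h2]

end Aux

/-- Let `q` be a power of a prime `p`, `F̄` an algebraic
closure of `F_p` and `n ≥ 1`.  The set `Π` of block-diagonal matrices
`M = diag(A,B) ∈ GL_{2n}(F̄)` with `MᵀJM = J` and `M = ẏ·M^{(q)}·ẏ⁻¹` is a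
subgroup of `GL_{2n}(F̄)`, the finite unitary group
`U_n(F_q) = {A ∈ GL_n(F_{q^2}) : A†A = 1}` is a subgroup of `GL_n(F̄)`
(with `F_{q^2} ⊆ F̄` the fixed field of `x ↦ x^{q^2}`), and
`diag(A,B) ↦ A` is a group isomorphism `Π ≅ U_n(F_q)`. -/
theorem symplectic_zip_stabilizer_closed_orbit_iso_unitary
    (p e q n : ℕ) [Fact p.Prime] (he : 1 ≤ e) (hq : q = p ^ e) (hn : 1 ≤ n) :
    ∃ (P : Subgroup (Matrix (Fin n ⊕ Fin n) (Fin n ⊕ Fin n) (Fbar p))ˣ)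
      (U : Subgroup (Matrix (Fin n) (Fin n) (Fbar p))ˣ),
      (P : Set (Matrix (Fin n ⊕ Fin n) (Fin n ⊕ Fin n) (Fbar p))ˣ) =
        {M : (Matrix (Fin n ⊕ Fin n) (Fin n ⊕ Fin n) (Fbar p))ˣ | ∃ A B : Matrix (Fin n) (Fin n) (Fbar p),
          (M : Matrix (Fin n ⊕ Fin n) (Fin n ⊕ Fin n) (Fbar p)) =
            Matrix.fromBlocks A 0 0 B ∧
          (M : Matrix (Fin n ⊕ Fin n) (Fin n ⊕ Fin n) (Fbar p))ᵀ * sympJ p n *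
            (M : Matrix (Fin n ⊕ Fin n) (Fin n ⊕ Fin n) (Fbar p)) = sympJ p n ∧
          (M : Matrix (Fin n ⊕ Fin n) (Fin n ⊕ Fin n) (Fbar p)) =
            ydot p n *
              ((M : Matrix (Fin n ⊕ Fin n) (Fin n ⊕ Fin n) (Fbar p)).map
                fun x => x ^ q) * (ydot p n)⁻¹} ∧
      (U : Set (Matrix (Fin n) (Fin n) (Fbar p))ˣ) =
        {A : (Matrix (Fin n) (Fin n) (Fbar p))ˣ | (∀ i j : Fin n,
            ((A : Matrix (Fin n) (Fin n) (Fbar p)) i j) ^ (q ^ 2) =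
              (A : Matrix (Fin n) (Fin n) (Fbar p)) i j) ∧
          dagger p q n (A : Matrix (Fin n) (Fin n) (Fbar p)) *
            (A : Matrix (Fin n) (Fin n) (Fbar p)) = 1} ∧
      ∃ iso : P ≃* U,
        ∀ (M : P) (A B : Matrix (Fin n) (Fin n) (Fbar p)),
          ((M : (Matrix (Fin n ⊕ Fin n) (Fin n ⊕ Fin n) (Fbar p))ˣ) :
              Matrix (Fin n ⊕ Fin n) (Fin n ⊕ Fin n) (Fbar p)) =
            Matrix.fromBlocks A 0 0 B →
          ((iso M : (Matrix (Fin n) (Fin n) (Fbar p))ˣ) :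
              Matrix (Fin n) (Fin n) (Fbar p)) = A := by
  subst hq
  have hfun : (fun x : Fbar p => x ^ p ^ e) = ⇑(phiHom p e) :=
    funext fun x => (phiHom_apply p e x).symm
  refine ⟨Subgroup.map (psiHom p e n) (Usub p e n), Usub p e n, ?_, rfl, ?_⟩
  · -- set equality for P
    rw [Subgroup.coe_map]
    ext M
    simp only [Set.mem_image, SetLike.mem_coe, Set.mem_setOf_eq]
    constructor
    · rintro ⟨A', hA', rfl⟩
      obtain ⟨hfix, hdag⟩ := hA'
      set A : Matrix (Fin n) (Fin n) (Fbar p) := (A' : Matrix (Fin n) (Fin n) (Fbar p)) with hA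
      have hfixm : (A.map (phiHom p e)).map (phiHom p e) = A := (fix_iff p e n A).mpr hfix
      have key1 : (A.map (phiHom p e))ᵀ * (antidiagK p n * A) = antidiagK p n := by
        rw [dagger_eq, map_KXK, Matrix.transpose_map] at hdag
        calc (A.map (phiHom p e))ᵀ * (antidiagK p n * A)
            = (antidiagK p n * antidiagK p n) *
              ((A.map (phiHom p e))ᵀ * (antidiagK p n * A)) := by
              rw [K_mul_K, one_mul]
          _ = antidiagK p n *
              ((antidiagK p n * (A.map (phiHom p e))ᵀ * antidiagK p n) * A) := by
              simp only [Matrix.mul_assoc]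
          _ = antidiagK p n * 1 := by rw [hdag]
          _ = antidiagK p n := by rw [Matrix.mul_one]
      have key2 : Aᵀ * (antidiagK p n * A.map (phiHom p e)) = antidiagK p n := by
        apply mapPhi_injective p e n
        show (Aᵀ * (antidiagK p n * A.map (phiHom p e))).map (phiHom p e)
            = (antidiagK p n).map (phiHom p e)
        rw [Matrix.map_mul, Matrix.map_mul, K_map, hfixm, Matrix.transpose_map]
        exact key1
      refine ⟨A, A.map (phiHom p e), psiHom_coe p e n A', ?_, ?_⟩
      · rw [psiHom_coe]
        exact sympJ_cond p n A (A.map (phiHom p e)) key2 key1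
      · rw [psiHom_coe, hfun, frob_conj, hfixm]
    · rintro ⟨A, B, hblock, hsymp, hfrob⟩
      rw [hblock, hfun, frob_conj] at hfrob
      have h2 : fromBlocks A 0 0 B =
          fromBlocks (B.map (phiHom p e)) 0 0 (A.map (phiHom p e)) := hfrob
      have hA : A = B.map (phiHom p e) := by
        have := congrArg Matrix.toBlocks₁₁ h2
        rwa [toBlocks_fromBlocks₁₁, toBlocks_fromBlocks₁₁] at this
      have hB : B = A.map (phiHom p e) := by
        have := congrArg Matrix.toBlocks₂₂ h2
        rwa [toBlocks_fromBlocks₂₂, toBlocks_fromBlocks₂₂] at this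
      have hfixm : (A.map (phiHom p e)).map (phiHom p e) = A := by
        rw [← hB, ← hA]
      rw [hblock, sympJ, fromBlocks_transpose, fromBlocks_multiply, fromBlocks_multiply]
        at hsymp
      have key2 : Aᵀ * (antidiagK p n * B) = antidiagK p n := by
        have := congrArg Matrix.toBlocks₁₂ hsymp
        rw [toBlocks_fromBlocks₁₂, toBlocks_fromBlocks₁₂] at this
        simpa [Matrix.mul_assoc] using this
      have key2' : Aᵀ * (antidiagK p n * A.map (phiHom p e)) = antidiagK p n := by
        rw [← hB]; exact key2
      have key1 : (A.map (phiHom p e))ᵀ * (antidiagK p n * A) = antidiagK p n := by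
        have hm := congrArg (fun X => X.map (phiHom p e)) key2'
        simp only [Matrix.map_mul] at hm
        rw [K_map, hfixm, Matrix.transpose_map] at hm
        exact hm
      -- A is invertible
      have hMu : IsUnit ((M : Matrix (Fin n ⊕ Fin n) (Fin n ⊕ Fin n) (Fbar p))) := M.isUnit
      rw [hblock, Matrix.isUnit_iff_isUnit_det, Matrix.det_fromBlocks_zero₂₁] at hMu
      have hAdet : IsUnit A.det := isUnit_of_mul_isUnit_left hMu
      have hAu : IsUnit A := (Matrix.isUnit_iff_isUnit_det A).mpr hAdet
      obtain ⟨uA, huA⟩ := hAu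
      refine ⟨uA, ⟨?_, ?_⟩, ?_⟩
      · rw [huA]; exact (fix_iff p e n A).mp hfixm
      · rw [huA, dagger_eq, map_KXK, Matrix.transpose_map]
        calc antidiagK p n * (A.map (phiHom p e))ᵀ * antidiagK p n * A
            = antidiagK p n * ((A.map (phiHom p e))ᵀ * (antidiagK p n * A)) := by
              simp only [Matrix.mul_assoc]
          _ = antidiagK p n * antidiagK p n := by rw [key1]
          _ = 1 := K_mul_K p n
      · apply Units.ext
        rw [psiHom_coe, huA, hblock, ← hB]
  · -- the isomorphism
    refine ⟨(Subgroup.equivMapOfInjective (Usub p e n) (psiHom p e n)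
      (psiHom_injective p e n)).symm, ?_⟩
    intro M A B hblock
    set eqv := Subgroup.equivMapOfInjective (Usub p e n) (psiHom p e n)
      (psiHom_injective p e n) with heqv
    have h1 : ((eqv (eqv.symm M) : Subgroup.map (psiHom p e n) (Usub p e n)) :
        (Matrix (Fin n ⊕ Fin n) (Fin n ⊕ Fin n) (Fbar p))ˣ) = (M :
        (Matrix (Fin n ⊕ Fin n) (Fin n ⊕ Fin n) (Fbar p))ˣ) := by
      rw [eqv.apply_symm_apply]
    have h2 : (psiHom p e n) ((eqv.symm M : Usub p e n) :
        (Matrix (Fin n) (Fin n) (Fbar p))ˣ) = (M :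
        (Matrix (Fin n ⊕ Fin n) (Fin n ⊕ Fin n) (Fbar p))ˣ) := h1
    have h3 := congrArg Units.val h2
    rw [psiHom_coe, hblock] at h3
    have h4 := congrArg Matrix.toBlocks₁₁ h3
    rwa [toBlocks_fromBlocks₁₁, toBlocks_fromBlocks₁₁] at h4
end

section
/- Let q be a power of a prime p, let F̄ be an algebraic closure of F_p, let n ≥ 1, and let σ be a permutation of {1,…,n}. Consider the group G_σ = {(a₁,…,a_n) ∈ (F̄ˣ)^n : a_i = (a_{σ⁻¹(i)})^q for all i} under componentwise multiplication. Then G_σ is isomorphic to the product, over the cycles c of σ (including fixed points as cycles of length 1), of the unit groups F_{q^{ℓ(c)}}ˣ, where ℓ(c) is the length of the cycle c; in particular G_σ has order ∏_c (q^{ℓ(c)} − 1). -/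
/-- The unit group `F_Nˣ` of the finite subfield `{x : x^N = x}` of a field
`F`, as a subgroup of `Fˣ` (for `N = q^ℓ` this is `F_{q^ℓ}ˣ ⊆ F̄ˣ`). -/
def subfieldUnits (F : Type) [Field F] (N : ℕ) : Subgroup Fˣ where
  carrier := {x : Fˣ | (x : F) ^ N = (x : F)}
  one_mem' := by simp
  mul_mem' := by
    intro a b ha hb
    simp only [Set.mem_setOf_eq, Units.val_mul, mul_pow] at *
    rw [ha, hb]
  inv_mem' := by
    intro a ha
    simp only [Set.mem_setOf_eq] at *
    have h : a ^ N = a := Units.ext (by simpa using ha)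
    have h' : a⁻¹ ^ N = a⁻¹ := by rw [inv_pow, h]
    calc ((a⁻¹ : Fˣ) : F) ^ N = ((a⁻¹ ^ N : Fˣ) : F) := (Units.val_pow_eq_pow_val _ _).symm
      _ = ((a⁻¹ : Fˣ) : F) := by rw [h']

/-! An element `a` of `G_σ` satisfies `a (σ^[k] r) = a r ^ q ^ k`, so it is determined by its
values at representatives `r` of the cycles; going once around the cycle of `r` forces
`a r ^ q ^ ℓ = a r`, and conversely every such value extends consistently along the cycle.
In `F̄ˣ` the solutions of `x ^ p ^ m = x` are the `(p ^ m - 1)`-th roots of unity, and there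
are `p ^ m - 1` of them because `p ^ m - 1` is prime to `p`. -/

open Function Equiv

theorem Function.iterate_eq_iterate_of_isPeriodicPt_minimalPeriod {α β : Type*}
    {f : α → α} {g : β → β} {x : α} {y : β} {k k' : ℕ} (hx : x ∈ periodicPts f)
    (hy : IsPeriodicPt g (minimalPeriod f x) y) (h : f^[k] x = f^[k'] x) :
    g^[k] y = g^[k'] y := by
  have hpos := minimalPeriod_pos_of_mem_periodicPts hx
  have hmod : k % minimalPeriod f x = k' % minimalPeriod f x :=
    iterate_injOn_Iio_minimalPeriod (Nat.mod_lt _ hpos) (Nat.mod_lt _ hpos)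
      (by simpa only [iterate_mod_minimalPeriod_eq] using h)
  rw [← hy.iterate_mod_apply k, ← hy.iterate_mod_apply k', hmod]

theorem Equiv.Perm.exists_finset_sameCycle_representatives {ι : Type*} [Finite ι]
    (σ : Perm ι) : ∃ s : Finset ι, ∀ x, ∃! r, r ∈ s ∧ σ.SameCycle r x := by
  let c := Perm.SameCycle.setoid σ
  refine ⟨(Set.range fun x => (Quotient.mk c x).out).toFinite.toFinset, fun x =>
    ⟨(Quotient.mk c x).out, ⟨by simp, Quotient.mk_out (s := c) x⟩, ?_⟩⟩
  rintro r ⟨hr, hrx⟩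
  obtain ⟨y, rfl⟩ : ∃ y, (Quotient.mk c y).out = r := by simpa using hr
  have hyx : Quotient.mk c y = Quotient.mk c x :=
    Quotient.sound ((Setoid.symm (Quotient.mk_out (s := c) y)).trans hrx)
  rw [hyx]

section TwistedPowInvariants

variable (G : Type*) [CommGroup G] {ι : Type*}

def powFixedPoints (N : ℕ) : Subgroup G where
  carrier := {x | x ^ N = x}
  one_mem' := one_pow N
  mul_mem' {a b} (ha : a ^ N = a) (hb : b ^ N = b) := show (a * b) ^ N = a * b by
    rw [mul_pow, ha, hb]
  inv_mem' {a} (ha : a ^ N = a) := show a⁻¹ ^ N = a⁻¹ by rw [inv_pow, ha]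

def twistedPowInvariants (σ : Perm ι) (q : ℕ) : Subgroup (ι → G) where
  carrier := {a | ∀ i, a i = a (σ⁻¹ i) ^ q}
  one_mem' _ := by simp
  mul_mem' {a b} ha hb i := by
    simp only [Pi.mul_apply, mul_pow]
    rw [← ha i, ← hb i]
  inv_mem' {a} ha i := by
    simp only [Pi.inv_apply, inv_pow]
    rw [← ha i]

variable {G} {σ : Perm ι} {q : ℕ}

theorem mem_powFixedPoints {N : ℕ} {x : G} : x ∈ powFixedPoints G N ↔ x ^ N = x := Iff.rfl

theorem mem_twistedPowInvariants_iff {a : ι → G} :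
    a ∈ twistedPowInvariants G σ q ↔ ∀ i, a (σ i) = a i ^ q :=
  ⟨fun h i => by simpa using h (σ i), fun h i => by simpa using h (σ⁻¹ i)⟩

theorem apply_iterate_of_mem_twistedPowInvariants {a : ι → G}
    (ha : a ∈ twistedPowInvariants G σ q) (k : ℕ) (j : ι) : a (σ^[k] j) = a j ^ q ^ k := by
  induction k with
  | zero => simp
  | succ k ih =>
    rw [iterate_succ_apply', mem_twistedPowInvariants_iff.1 ha, ih, ← pow_mul, ← pow_succ]

theorem apply_mem_powFixedPoints_of_mem_twistedPowInvariants {a : ι → G}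
    (ha : a ∈ twistedPowInvariants G σ q) (r : ι) :
    a r ∈ powFixedPoints G (q ^ minimalPeriod σ r) := by
  rw [mem_powFixedPoints, ← apply_iterate_of_mem_twistedPowInvariants ha, iterate_minimalPeriod]

theorem pow_pow_eq_of_iterate_eq [Finite ι] {r : ι} {u : G}
    (hu : u ∈ powFixedPoints G (q ^ minimalPeriod σ r)) {k k' : ℕ} (h : σ^[k] r = σ^[k'] r) :
    u ^ q ^ k = u ^ q ^ k' := by
  have hperiodic : IsPeriodicPt (· ^ q) (minimalPeriod σ r) u := by
    rw [IsPeriodicPt, IsFixedPt, pow_iterate]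
    exact hu
  simpa only [pow_iterate] using
    iterate_eq_iterate_of_isPeriodicPt_minimalPeriod (σ.injective.mem_periodicPts r) hperiodic h

variable (G σ q)

def restrictTwistedPowInvariants (s : Finset ι) :
    twistedPowInvariants G σ q →* ((r : s) → powFixedPoints G (q ^ minimalPeriod σ r)) where
  toFun a r := ⟨a.1 r, apply_mem_powFixedPoints_of_mem_twistedPowInvariants a.2 r⟩
  map_one' := rfl
  map_mul' _ _ := rfl

variable {G σ q}

theorem restrictTwistedPowInvariants_injective [Finite ι] {s : Finset ι}
    (hs : ∀ x, ∃ r ∈ s, σ.SameCycle r x) :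
    Injective (restrictTwistedPowInvariants G σ q s) := by
  intro a b hab
  ext x
  obtain ⟨r, hr, hrx⟩ := hs x
  obtain ⟨k, hk⟩ := hrx.exists_nat_pow_eq
  have hr_eq : a.1 r = b.1 r := congr_arg Subtype.val (congr_fun hab ⟨r, hr⟩)
  rw [← hk, ← Perm.iterate_eq_pow, apply_iterate_of_mem_twistedPowInvariants a.2,
    apply_iterate_of_mem_twistedPowInvariants b.2, hr_eq]

/-- The preimage of `b` is `x ↦ b r ^ q ^ k` for `x = σ^[k] r` with `r ∈ s`; it is well defined
by `pow_pow_eq_of_iterate_eq`. -/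
theorem restrictTwistedPowInvariants_surjective [Finite ι] {s : Finset ι}
    (hs : ∀ x, ∃! r, r ∈ s ∧ σ.SameCycle r x) :
    Surjective (restrictTwistedPowInvariants G σ q s) := by
  intro b
  have hrep : ∀ x, ∃ r : s, σ.SameCycle r x ∧ ∀ r' : s, σ.SameCycle r' x → r' = r := by
    intro x
    obtain ⟨r, ⟨hr, hrx⟩, huniq⟩ := hs x
    exact ⟨⟨r, hr⟩, hrx, fun r' hr' => Subtype.ext (huniq r' ⟨r'.2, hr'⟩)⟩
  choose R hR_sameCycle hR_unique using hrep
  have hR_apply (x : ι) : R (σ x) = R x :=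
    (hR_unique (σ x) (R x) (Perm.sameCycle_apply_right.2 (hR_sameCycle x))).symm
  have hR_self (r : s) : R r = r := (hR_unique r r (Perm.SameCycle.refl σ r)).symm
  have hk (x : ι) : ∃ k, σ^[k] (R x) = x := by
    obtain ⟨k, hk⟩ := (hR_sameCycle x).exists_nat_pow_eq
    exact ⟨k, by rwa [Perm.iterate_eq_pow]⟩
  choose k hk using hk
  let a (x : ι) : G := (b (R x) : G) ^ q ^ k x
  have ha_eq {x : ι} {j : ℕ} (hj : σ^[j] (R x) = x) : a x = (b (R x) : G) ^ q ^ j :=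
    pow_pow_eq_of_iterate_eq (b (R x)).2 ((hk x).trans hj.symm)
  have ha_mem : a ∈ twistedPowInvariants G σ q := by
    refine mem_twistedPowInvariants_iff.2 fun x => ?_
    have hsucc : σ^[k x + 1] (R (σ x)) = σ x := by
      rw [hR_apply, iterate_succ_apply', hk]
    rw [ha_eq hsucc, hR_apply, pow_succ, pow_mul]
  refine ⟨⟨a, ha_mem⟩, funext fun r => Subtype.ext ?_⟩
  have hzero : σ^[0] (R r) = r := by rw [hR_self, iterate_zero_apply]
  change a r = (b r : G)
  rw [ha_eq hzero, hR_self, pow_zero, pow_one]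

noncomputable def twistedPowInvariantsEquivPi [Finite ι] {s : Finset ι}
    (hs : ∀ x, ∃! r, r ∈ s ∧ σ.SameCycle r x) :
    twistedPowInvariants G σ q ≃* ((r : s) → powFixedPoints G (q ^ minimalPeriod σ r)) :=
  MulEquiv.ofBijective (restrictTwistedPowInvariants G σ q s)
    ⟨restrictTwistedPowInvariants_injective fun x => (hs x).exists,
      restrictTwistedPowInvariants_surjective hs⟩

theorem natCard_twistedPowInvariants [Finite ι] {s : Finset ι}
    (hs : ∀ x, ∃! r, r ∈ s ∧ σ.SameCycle r x) :
    Nat.card (twistedPowInvariants G σ q) =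
      ∏ r ∈ s, Nat.card (powFixedPoints G (q ^ minimalPeriod σ r)) := by
  rw [Nat.card_congr (twistedPowInvariantsEquivPi hs).toEquiv, Nat.card_pi,
    Finset.prod_coe_sort s fun r => Nat.card (powFixedPoints G (q ^ minimalPeriod σ r))]

end TwistedPowInvariants

theorem powFixedPoints_units_eq_rootsOfUnity {M : Type*} [CommMonoid M] {N : ℕ} (hN : 0 < N) :
    powFixedPoints Mˣ N = rootsOfUnity (N - 1) M := by
  ext x
  rw [mem_powFixedPoints, mem_rootsOfUnity, ← mul_eq_right (b := x), ← pow_succ,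
    Nat.sub_add_cancel hN]

theorem subfieldUnits_eq_powFixedPoints (F : Type) [Field F] (N : ℕ) :
    subfieldUnits F N = powFixedPoints Fˣ N := by
  ext x
  rw [mem_powFixedPoints, Units.ext_iff, Units.val_pow_eq_pow_val]
  rfl

theorem natCard_powFixedPoints_units_pow_char {F : Type*} [Field F] [IsSepClosed F] {p : ℕ}
    [CharP F p] (hp : 0 < p) {m : ℕ} (hm : 0 < m) :
    Nat.card (powFixedPoints Fˣ (p ^ m)) = p ^ m - 1 := by
  have hpm : 1 ≤ p ^ m := Nat.one_le_pow m p hp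
  have : NeZero ((p ^ m - 1 : ℕ) : F) := ⟨by
    rw [Nat.cast_sub hpm, Nat.cast_pow, CharP.cast_eq_zero, zero_pow hm.ne', Nat.cast_one,
      zero_sub, neg_ne_zero]
    exact one_ne_zero⟩
  have : NeZero (p ^ m - 1) := .of_neZero_natCast F
  rw [powFixedPoints_units_eq_rootsOfUnity hpm, HasEnoughRootsOfUnity.natCard_rootsOfUnity]

theorem borel_zip_stabilizer_iso_product_over_cycles_general
    (p e q : ℕ) [Fact p.Prime] (he : 1 ≤ e) (hq : q = p ^ e)
    (n : ℕ) (σ : Equiv.Perm (Fin n)) :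
    ∃ H : Subgroup (Fin n → (Fbar p)ˣ),
      (H : Set (Fin n → (Fbar p)ˣ)) =
        {a : Fin n → (Fbar p)ˣ | ∀ i : Fin n, a i = (a (σ⁻¹ i)) ^ q} ∧
      ∃ s : Finset (Fin n),
        (∀ x : Fin n, ∃! r : Fin n, r ∈ s ∧ σ.SameCycle r x) ∧
        Nonempty (H ≃*
          ((r : s) → subfieldUnits (Fbar p) (q ^ Function.minimalPeriod σ (r : Fin n)))) ∧
        Nat.card H = ∏ r ∈ s, (q ^ Function.minimalPeriod σ r - 1) := by
  obtain ⟨s, hs⟩ := σ.exists_finset_sameCycle_representatives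
  refine ⟨twistedPowInvariants (Fbar p)ˣ σ q, rfl, s, hs, ⟨(twistedPowInvariantsEquivPi hs).trans
    (MulEquiv.piCongrRight fun r => MulEquiv.subgroupCongr
      (subfieldUnits_eq_powFixedPoints _ _).symm)⟩, ?_⟩
  rw [natCard_twistedPowInvariants hs]
  refine Finset.prod_congr rfl fun r _ => ?_
  have hperiod : 0 < minimalPeriod σ r :=
    minimalPeriod_pos_of_mem_periodicPts (σ.injective.mem_periodicPts r)
  rw [hq, ← pow_mul]
  exact natCard_powFixedPoints_units_pow_char (Fact.out : p.Prime).pos (Nat.mul_pos he hperiod)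

/-- Let `q` be a power of a prime `p`, `F̄` an algebraic
closure of `F_p`, `n ≥ 1` and `σ` a permutation of `{1,…,n}`.  The group
`G_σ = {(a₁,…,a_n) ∈ (F̄ˣ)^n : a_i = (a_{σ⁻¹(i)})^q}` is isomorphic to the
product, over a set `s` of representatives of the cycles of `σ` (including
fixed points as cycles of length `1`), of the unit groups `F_{q^{ℓ(c)}}ˣ`,
where `ℓ(c)` is the cycle length (the minimal period of `σ` at the
representative); in particular its order is `∏_c (q^{ℓ(c)} − 1)`. -/
theorem borel_zip_stabilizer_iso_product_over_cycles
    (p e q : ℕ) [Fact p.Prime] (he : 1 ≤ e) (hq : q = p ^ e)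
    (n : ℕ) (hn : 1 ≤ n) (σ : Equiv.Perm (Fin n)) :
    ∃ H : Subgroup (Fin n → (Fbar p)ˣ),
      (H : Set (Fin n → (Fbar p)ˣ)) =
        {a : Fin n → (Fbar p)ˣ | ∀ i : Fin n, a i = (a (σ⁻¹ i)) ^ q} ∧
      ∃ s : Finset (Fin n),
        (∀ x : Fin n, ∃! r : Fin n, r ∈ s ∧ σ.SameCycle r x) ∧
        Nonempty (H ≃*
          ((r : s) → subfieldUnits (Fbar p) (q ^ Function.minimalPeriod σ (r : Fin n)))) ∧
        Nat.card H = ∏ r ∈ s, (q ^ Function.minimalPeriod σ r - 1) :=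
  borel_zip_stabilizer_iso_product_over_cycles_general p e q he hq n σ
end

section
/- Let n ≥ 3 and 1 ≤ k ≤ n. In S_n, let I = {(i i+1) : 2 ≤ i ≤ n−1}, let w = (1 2 ⋯ k), and let w_{0,I} be the permutation with w_{0,I}(1) = 1 and w_{0,I}(x) = n+2−x for 2 ≤ x ≤ n; set u = w_{0,I}∘w. Define M(n,k) = {k+1, …, n+1−k} if 2k ≤ n+1 and M(n,k) = {n+2−k, …, k−1} if 2k > n+1. Then the largest subset K of {σ ∈ I : wσw⁻¹ ∈ I} satisfying uKu⁻¹ = K is exactly K = {(i i+1) : i ∈ M(n,k) and i+1 ∈ M(n,k)}; i.e. this set is stable under conjugation by u, is contained in {σ ∈ I : wσw⁻¹ ∈ I}, and contains every subset of {σ ∈ I : wσw⁻¹ ∈ I} stable under conjugation by u. -/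
def Iset (n : ℕ) : Set (Equiv.Perm (Fin n)) :=
  {σ | ∃ a b : Fin n, (b : ℕ) = (a : ℕ) + 1 ∧ 1 ≤ (a : ℕ) ∧ σ = Equiv.swap a b}

def Mset (n k : ℕ) : Set ℕ :=
  if 2 * k ≤ n + 1 then Set.Icc (k + 1) (n + 1 - k) else Set.Icc (n + 2 - k) (k - 1)

namespace Aux14

abbrev swp (n m : ℕ) (h1 : m + 1 < n) : Equiv.Perm (Fin n) :=
  Equiv.swap ⟨m, by omega⟩ ⟨m + 1, h1⟩

lemma swap_eq_swap' {α : Type*} [DecidableEq α] {a b c d : α} (hab : a ≠ b)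
    (h : Equiv.swap a b = Equiv.swap c d) : (a = c ∧ b = d) ∨ (a = d ∧ b = c) := by
  have h1 : Equiv.swap c d a = b := by rw [← h]; exact Equiv.swap_apply_left a b
  rcases eq_or_ne a c with rfl | hac
  · rw [Equiv.swap_apply_left] at h1
    exact Or.inl ⟨rfl, h1.symm⟩
  · rcases eq_or_ne a d with rfl | had
    · rw [Equiv.swap_apply_right] at h1
      exact Or.inr ⟨rfl, h1.symm⟩
    · rw [Equiv.swap_apply_of_ne_of_ne hac had] at h1
      exact absurd h1 hab

lemma mk_ne {n a b : ℕ} (ha : a < n) (hb : b < n) (h : a ≠ b) :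
    (⟨a, ha⟩ : Fin n) ≠ ⟨b, hb⟩ := by
  simpa [Fin.ext_iff] using h

lemma swp_mem_Iset_iff {n m : ℕ} (h1 : m + 1 < n) : swp n m h1 ∈ Iset n ↔ 1 ≤ m := by
  constructor
  · intro h
    obtain ⟨a, b, hb, ha, heq⟩ := h
    rcases swap_eq_swap' (mk_ne _ _ (by omega)) heq with ⟨h2, h3⟩ | ⟨h2, h3⟩
    · have : m = (a : ℕ) := by simpa using congrArg Fin.val h2
      omega
    · have e2 : m = (b : ℕ) := by simpa using congrArg Fin.val h2
      have e3 : m + 1 = (a : ℕ) := by simpa using congrArg Fin.val h3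
      omega
  · intro hm
    exact ⟨⟨m, by omega⟩, ⟨m + 1, h1⟩, rfl, hm, rfl⟩

lemma Iset_elim' {n : ℕ} {σ : Equiv.Perm (Fin n)} (h : σ ∈ Iset n) :
    ∃ m, ∃ h1 : m + 1 < n, 1 ≤ m ∧ σ = swp n m h1 := by
  obtain ⟨a, b, hb, ha, rfl⟩ := h
  have hbn : (a : ℕ) + 1 < n := by have := b.isLt; omega
  refine ⟨(a : ℕ), hbn, ha, ?_⟩
  have e2 : b = ⟨(a : ℕ) + 1, hbn⟩ := Fin.ext hb
  rw [e2]

lemma Iset_vals {n : ℕ} {p q : Fin n} (hne : (p : ℕ) ≠ (q : ℕ))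
    (h : Equiv.swap p q ∈ Iset n) :
    ((q : ℕ) = (p : ℕ) + 1 ∧ 1 ≤ (p : ℕ)) ∨ ((p : ℕ) = (q : ℕ) + 1 ∧ 1 ≤ (q : ℕ)) := by
  obtain ⟨a, b, hb, ha, heq⟩ := h
  rcases swap_eq_swap' (fun hpq => hne (congrArg Fin.val hpq)) heq with ⟨h2, h3⟩ | ⟨h2, h3⟩
  · subst h2; subst h3
    exact Or.inl ⟨hb, ha⟩
  · subst h2; subst h3
    exact Or.inr ⟨hb, ha⟩

lemma mem_Mset {n k x : ℕ} : x ∈ Mset n k ↔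
    ((2 * k ≤ n + 1 ∧ k + 1 ≤ x ∧ x + k ≤ n + 1) ∨
      (n + 2 ≤ 2 * k ∧ n + 2 ≤ x + k ∧ x + 1 ≤ k)) := by
  unfold Mset
  split_ifs with h <;> simp only [Set.mem_Icc] <;> omega

lemma swap_conj_eq {n : ℕ} (v : Equiv.Perm (Fin n)) {p q : Fin n} {m' : ℕ} (h1' : m' + 1 < n)
    (h : ((v p : ℕ) = m' ∧ (v q : ℕ) = m' + 1) ∨ ((v p : ℕ) = m' + 1 ∧ (v q : ℕ) = m')) :
    v * Equiv.swap p q * v⁻¹ = swp n m' h1' := by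
  rw [← Equiv.swap_apply_apply]
  rcases h with ⟨hp, hq⟩ | ⟨hp, hq⟩
  · rw [show v p = (⟨m', Nat.lt_of_succ_lt h1'⟩ : Fin n) from Fin.ext hp,
      show v q = (⟨m' + 1, h1'⟩ : Fin n) from Fin.ext hq]
  · rw [show v p = (⟨m' + 1, h1'⟩ : Fin n) from Fin.ext hp,
      show v q = (⟨m', Nat.lt_of_succ_lt h1'⟩ : Fin n) from Fin.ext hq, Equiv.swap_comm]

lemma wval {N k : ℕ} (hk1 : 1 ≤ k) {kk : Fin (N + 1)} (hkk : (kk : ℕ) = k - 1)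
    (x : Fin (N + 1)) :
    ((Fin.cycleRange kk x : Fin (N + 1)) : ℕ) =
      if (x : ℕ) + 1 < k then (x : ℕ) + 1 else if (x : ℕ) + 1 = k then 0 else (x : ℕ) := by
  have hx := x.isLt
  rcases lt_trichotomy (x : ℕ) (kk : ℕ) with h | h | h
  · rw [Fin.coe_cycleRange_of_lt (Fin.lt_def.mpr h)]
    split_ifs <;> omega
  · rw [Fin.cycleRange_of_eq (Fin.ext h)]
    simp only [Fin.val_zero]
    split_ifs <;> omega
  · rw [Fin.cycleRange_of_gt (Fin.lt_def.mpr h)]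
    split_ifs <;> omega

lemma uval {N k : ℕ} (hk1 : 1 ≤ k) {kk : Fin (N + 1)} (hkk : (kk : ℕ) = k - 1)
    (w0I : Equiv.Perm (Fin (N + 1)))
    (hw0I : ∀ a : Fin (N + 1), (w0I a : ℕ) = if (a : ℕ) = 0 then 0 else (N + 1) - (a : ℕ))
    (x : Fin (N + 1)) :
    (((w0I * Fin.cycleRange kk) x : Fin (N + 1)) : ℕ) =
      if (x : ℕ) + 1 < k then N - (x : ℕ)
      else if (x : ℕ) + 1 = k then 0 else (N + 1) - (x : ℕ) := by
  have hx := x.isLt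
  rw [Equiv.Perm.mul_apply, hw0I, wval hk1 hkk x]
  split_ifs <;> first | omega | contradiction

def Kst (n k : ℕ) : Set (Equiv.Perm (Fin n)) :=
  {σ | ∃ a b : Fin n, (b : ℕ) = (a : ℕ) + 1 ∧ ((a : ℕ) + 1) ∈ Mset n k ∧
    ((b : ℕ) + 1) ∈ Mset n k ∧ σ = Equiv.swap a b}

lemma swp_mem_Kst {n k m : ℕ} (h1 : m + 1 < n) (h2 : m + 1 ∈ Mset n k)
    (h3 : m + 2 ∈ Mset n k) : swp n m h1 ∈ Kst n k :=
  ⟨⟨m, by omega⟩, ⟨m + 1, h1⟩, rfl, h2, h3, rfl⟩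

lemma Kst_elim {n k : ℕ} {σ : Equiv.Perm (Fin n)} (h : σ ∈ Kst n k) :
    ∃ m, ∃ h1 : m + 1 < n, (m + 1) ∈ Mset n k ∧ (m + 2) ∈ Mset n k ∧ σ = swp n m h1 := by
  obtain ⟨a, b, hb, h2, h3, rfl⟩ := h
  have hbn : (a : ℕ) + 1 < n := by have := b.isLt; omega
  refine ⟨(a : ℕ), hbn, h2, ?_, ?_⟩
  · rw [hb] at h3; exact h3
  · have e2 : b = ⟨(a : ℕ) + 1, hbn⟩ := Fin.ext hb
    rw [e2]

end Aux14

open Aux14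

theorem largest_conjugation_stable_subset_unitary
    (n k : ℕ) (hn : 3 ≤ n) (hk1 : 1 ≤ k) (hkn : k ≤ n)
    (kk : Fin n) (hkk : (kk : ℕ) = k - 1)
    (w0I : Equiv.Perm (Fin n))
    (hw0I : ∀ a : Fin n, (w0I a : ℕ) = if (a : ℕ) = 0 then 0 else n - (a : ℕ)) :
    (fun σ => (w0I * Fin.cycleRange kk) * σ * (w0I * Fin.cycleRange kk)⁻¹) ''
        {σ | ∃ a b : Fin n, (b : ℕ) = (a : ℕ) + 1 ∧ ((a : ℕ) + 1) ∈ Mset n k ∧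
          ((b : ℕ) + 1) ∈ Mset n k ∧ σ = Equiv.swap a b} =
      {σ | ∃ a b : Fin n, (b : ℕ) = (a : ℕ) + 1 ∧ ((a : ℕ) + 1) ∈ Mset n k ∧
        ((b : ℕ) + 1) ∈ Mset n k ∧ σ = Equiv.swap a b} ∧
    {σ | ∃ a b : Fin n, (b : ℕ) = (a : ℕ) + 1 ∧ ((a : ℕ) + 1) ∈ Mset n k ∧
        ((b : ℕ) + 1) ∈ Mset n k ∧ σ = Equiv.swap a b} ⊆
      {σ ∈ Iset n | Fin.cycleRange kk * σ * (Fin.cycleRange kk)⁻¹ ∈ Iset n} ∧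
    ∀ K' : Set (Equiv.Perm (Fin n)),
      K' ⊆ {σ ∈ Iset n | Fin.cycleRange kk * σ * (Fin.cycleRange kk)⁻¹ ∈ Iset n} →
      (fun σ => (w0I * Fin.cycleRange kk) * σ * (w0I * Fin.cycleRange kk)⁻¹) '' K' = K' →
      K' ⊆ {σ | ∃ a b : Fin n, (b : ℕ) = (a : ℕ) + 1 ∧ ((a : ℕ) + 1) ∈ Mset n k ∧
        ((b : ℕ) + 1) ∈ Mset n k ∧ σ = Equiv.swap a b} := by
  obtain ⟨N, rfl⟩ : ∃ N, n = N + 1 := ⟨n - 1, by omega⟩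
  have hN : 2 ≤ N := by omega
  have hu' : ∀ (m : ℕ) (h : m < N + 1),
      (((w0I * Fin.cycleRange kk) ⟨m, h⟩ : Fin (N + 1)) : ℕ) =
        if m + 1 < k then N - m else if m + 1 = k then 0 else N + 1 - m :=
    fun m h => uval hk1 hkk w0I hw0I ⟨m, h⟩
  have hw' : ∀ (m : ℕ) (h : m < N + 1),
      ((Fin.cycleRange kk ⟨m, h⟩ : Fin (N + 1)) : ℕ) =
        if m + 1 < k then m + 1 else if m + 1 = k then 0 else m :=
    fun m h => wval hk1 hkk ⟨m, h⟩
  -- conjugation by u on adjacent swaps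
  have uconj : ∀ m m' (h1 : m + 1 < N + 1) (h1' : m' + 1 < N + 1),
      ((k ≤ m ∧ m' = N - m) ∨ (m + 3 ≤ k ∧ m' = N - 1 - m)) →
      (w0I * Fin.cycleRange kk) * swp (N + 1) m h1 * (w0I * Fin.cycleRange kk)⁻¹ =
        swp (N + 1) m' h1' := by
    intro m m' h1 h1' hcase
    apply swap_conj_eq
    right
    rcases hcase with ⟨hm, rfl⟩ | ⟨hm, rfl⟩ <;>
      exact ⟨by rw [hu']; split_ifs <;> omega, by rw [hu']; split_ifs <;> omega⟩
  -- conjugation by w on adjacent swaps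
  have wconj : ∀ m m' (h1 : m + 1 < N + 1) (h1' : m' + 1 < N + 1),
      ((k ≤ m ∧ m' = m) ∨ (m + 3 ≤ k ∧ m' = m + 1)) →
      Fin.cycleRange kk * swp (N + 1) m h1 * (Fin.cycleRange kk)⁻¹ = swp (N + 1) m' h1' := by
    intro m m' h1 h1' hcase
    apply swap_conj_eq
    left
    rcases hcase with ⟨hm, rfl⟩ | ⟨hm, rfl⟩ <;>
      exact ⟨by rw [hw']; split_ifs <;> omega, by rw [hw']; split_ifs <;> omega⟩
  -- membership in J' forces the index conditions
  have hJA : ∀ m (h1 : m + 1 < N + 1), swp (N + 1) m h1 ∈ Iset (N + 1) →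
      Fin.cycleRange kk * swp (N + 1) m h1 * (Fin.cycleRange kk)⁻¹ ∈ Iset (N + 1) →
      1 ≤ m ∧ (m + 3 ≤ k ∨ k ≤ m) := by
    intro m h1 hI hwI
    have hm : 1 ≤ m := (swp_mem_Iset_iff h1).mp hI
    refine ⟨hm, ?_⟩
    by_contra hcon
    push_neg at hcon
    obtain ⟨hc1, hc2⟩ := hcon
    rw [show Fin.cycleRange kk * swp (N + 1) m h1 * (Fin.cycleRange kk)⁻¹
        = Equiv.swap (Fin.cycleRange kk ⟨m, Nat.lt_of_succ_lt h1⟩)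
            (Fin.cycleRange kk ⟨m + 1, h1⟩)
        from (Equiv.swap_apply_apply _ _ _).symm] at hwI
    rcases (by omega : k = m + 1 ∨ k = m + 2) with hk2 | hk2
    · have hp0 : ((Fin.cycleRange kk ⟨m, Nat.lt_of_succ_lt h1⟩ : Fin (N + 1)) : ℕ) = 0 := by
        rw [hw']; split_ifs <;> omega
      have hq0 : ((Fin.cycleRange kk ⟨m + 1, h1⟩ : Fin (N + 1)) : ℕ) = m + 1 := by
        rw [hw']; split_ifs <;> omega
      have hne : ((Fin.cycleRange kk ⟨m, Nat.lt_of_succ_lt h1⟩ : Fin (N + 1)) : ℕ) ≠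
          ((Fin.cycleRange kk ⟨m + 1, h1⟩ : Fin (N + 1)) : ℕ) := by
        rw [hp0, hq0]; omega
      rcases Iset_vals hne hwI with ⟨e1, e2⟩ | ⟨e1, e2⟩ <;> omega
    · have hp0 : ((Fin.cycleRange kk ⟨m, Nat.lt_of_succ_lt h1⟩ : Fin (N + 1)) : ℕ) = m + 1 := by
        rw [hw']; split_ifs <;> omega
      have hq0 : ((Fin.cycleRange kk ⟨m + 1, h1⟩ : Fin (N + 1)) : ℕ) = 0 := by
        rw [hw']; split_ifs <;> omega
      have hne : ((Fin.cycleRange kk ⟨m, Nat.lt_of_succ_lt h1⟩ : Fin (N + 1)) : ℕ) ≠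
          ((Fin.cycleRange kk ⟨m + 1, h1⟩ : Fin (N + 1)) : ℕ) := by
        rw [hp0, hq0]; omega
      rcases Iset_vals hne hwI with ⟨e1, e2⟩ | ⟨e1, e2⟩ <;> omega
  refine ⟨?_, ?_, ?_⟩
  · -- part 1: stability of K under conjugation by u
    ext σ
    simp only [Set.mem_image, Set.mem_setOf_eq]
    constructor
    · rintro ⟨τ, hτ, rfl⟩
      obtain ⟨m, h1, hM1, hM2, rfl⟩ := Kst_elim hτ
      rw [mem_Mset] at hM1 hM2
      rcases le_or_gt (2 * k) (N + 2) with hc | hc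
      · rw [uconj m (N - m) h1 (by omega) (Or.inl ⟨by omega, rfl⟩)]
        exact swp_mem_Kst (by omega) (mem_Mset.mpr (by omega)) (mem_Mset.mpr (by omega))
      · rw [uconj m (N - 1 - m) h1 (by omega) (Or.inr ⟨by omega, rfl⟩)]
        exact swp_mem_Kst (by omega) (mem_Mset.mpr (by omega)) (mem_Mset.mpr (by omega))
    · intro hσ
      obtain ⟨m, h1, hM1, hM2, rfl⟩ := Kst_elim hσ
      rw [mem_Mset] at hM1 hM2
      rcases le_or_gt (2 * k) (N + 2) with hc | hc
      · refine ⟨swp (N + 1) (N - m) (by omega),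
          swp_mem_Kst (by omega) (mem_Mset.mpr (by omega)) (mem_Mset.mpr (by omega)), ?_⟩
        exact uconj (N - m) m (by omega) h1 (Or.inl ⟨by omega, by omega⟩)
      · refine ⟨swp (N + 1) (N - 1 - m) (by omega),
          swp_mem_Kst (by omega) (mem_Mset.mpr (by omega)) (mem_Mset.mpr (by omega)), ?_⟩
        exact uconj (N - 1 - m) m (by omega) h1 (Or.inr ⟨by omega, by omega⟩)
  · -- part 2: K ⊆ J'
    intro σ hσ
    obtain ⟨m, h1, hM1, hM2, rfl⟩ := Kst_elim hσ
    rw [mem_Mset] at hM1 hM2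
    have hI : swp (N + 1) m h1 ∈ Iset (N + 1) := (swp_mem_Iset_iff h1).mpr (by omega)
    refine ⟨hI, ?_⟩
    rcases le_or_gt (2 * k) (N + 2) with hc | hc
    · rw [wconj m m h1 h1 (Or.inl ⟨by omega, rfl⟩)]
      exact hI
    · rw [wconj m (m + 1) h1 (by omega) (Or.inr ⟨by omega, rfl⟩)]
      exact (swp_mem_Iset_iff _).mpr (by omega)
  · -- part 3: maximality
    intro K' hK'J hstab σ hσK
    have hforward : ∀ τ ∈ K',
        (w0I * Fin.cycleRange kk) * τ * (w0I * Fin.cycleRange kk)⁻¹ ∈ K' := by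
      intro τ hτ
      rw [← hstab]
      exact ⟨τ, hτ, rfl⟩
    have stepU : ∀ m m' (h1 : m + 1 < N + 1) (h1' : m' + 1 < N + 1), k ≤ m → m' = N - m →
        swp (N + 1) m h1 ∈ K' →
        swp (N + 1) m' h1' ∈ K' ∧ 1 ≤ m' ∧ (m' + 3 ≤ k ∨ k ≤ m') := by
      intro m m' h1 h1' hkm hm' hK
      have hc2 := hforward _ hK
      rw [uconj m m' h1 h1' (Or.inl ⟨hkm, hm'⟩)] at hc2
      obtain ⟨hI, hwI⟩ := hK'J hc2
      have h3 := hJA m' h1' hI hwI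
      exact ⟨hc2, h3.1, h3.2⟩
    have stepL : ∀ m m' (h1 : m + 1 < N + 1) (h1' : m' + 1 < N + 1), m + 3 ≤ k →
        m' = N - 1 - m → swp (N + 1) m h1 ∈ K' →
        swp (N + 1) m' h1' ∈ K' ∧ 1 ≤ m' ∧ (m' + 3 ≤ k ∨ k ≤ m') := by
      intro m m' h1 h1' hmk hm' hK
      have hc2 := hforward _ hK
      rw [uconj m m' h1 h1' (Or.inr ⟨hmk, hm'⟩)] at hc2
      obtain ⟨hI, hwI⟩ := hK'J hc2
      have h3 := hJA m' h1' hI hwI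
      exact ⟨hc2, h3.1, h3.2⟩
    obtain ⟨hI, hwI⟩ := hK'J hσK
    obtain ⟨m, h1, hm, rfl⟩ := Iset_elim' hI
    have hA := hJA m h1 hI hwI
    rcases le_or_gt (2 * k) (N + 2) with hc | hc
    · -- case 2k ≤ n+1 : good indices are [k, N-k]
      have bad : ∀ d m (h1 : m + 1 < N + 1), m ≤ d → k ≤ m → N + 1 ≤ m + k →
          swp (N + 1) m h1 ∈ K' → False := by
        intro d
        induction d with
        | zero => intro m h1 hd hkm hbig hK; omega
        | succ d ih =>
          intro m h1 hd hkm hbig hK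
          obtain ⟨hK2, hm2, hA2⟩ := stepU m (N - m) h1 (by omega) hkm rfl hK
          have hm'k : N - m + 3 ≤ k := by omega
          obtain ⟨hK3, hm3, hA3⟩ := stepL (N - m) (m - 1) (by omega) (by omega) hm'k
            (by omega) hK2
          exact ih (m - 1) (by omega) (by omega) (by omega) (by omega) hK3
      rcases hA.2 with hL | hU2
      · obtain ⟨hK2, hm2, hA2⟩ := stepL m (N - 1 - m) h1 (by omega) hL rfl hσK
        exact (bad (N - 1 - m) (N - 1 - m) (by omega) le_rfl (by omega) (by omega) hK2).elim
      · by_cases hsmall : m + k ≤ N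
        · exact swp_mem_Kst h1 (mem_Mset.mpr (by omega)) (mem_Mset.mpr (by omega))
        · exact (bad m m h1 le_rfl hU2 (by omega) hσK).elim
    · -- case 2k ≥ n+2 : good indices are [n+1-k, k-3]
      have badB : ∀ d m (h1 : m + 1 < N + 1), N ≤ m + k + d → 1 ≤ m → m + 3 ≤ k →
          m + k ≤ N + 1 → swp (N + 1) m h1 ∈ K' → False := by
        intro d
        induction d with
        | zero =>
          intro m h1 hd hm0 hmk hup hK
          obtain ⟨hK2, hm2, hA2⟩ := stepL m (N - 1 - m) h1 (by omega) hmk rfl hK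
          omega
        | succ d ih =>
          intro m h1 hd hm0 hmk hup hK
          by_cases hbase : N ≤ m + k
          · obtain ⟨hK2, hm2, hA2⟩ := stepL m (N - 1 - m) h1 (by omega) hmk rfl hK
            omega
          · obtain ⟨hK2, hm2, hA2⟩ := stepL m (N - 1 - m) h1 (by omega) hmk rfl hK
            have hkm2 : k ≤ N - 1 - m := by omega
            obtain ⟨hK3, hm3, hA3⟩ := stepU (N - 1 - m) (m + 1) (by omega) (by omega) hkm2
              (by omega) hK2
            exact ih (m + 1) (by omega) (by omega) (by omega) (by omega) (by omega) hK3
      rcases hA.2 with hL | hU2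
      · by_cases hbig : N + 2 ≤ m + k
        · exact swp_mem_Kst h1 (mem_Mset.mpr (by omega)) (mem_Mset.mpr (by omega))
        · exact (badB N m h1 (by omega) (by omega) hL (by omega) hσK).elim
      · obtain ⟨hK2, hm2, hA2⟩ := stepU m (N - m) h1 (by omega) hU2 rfl hσK
        have hlow : (N - m) + 3 ≤ k := by omega
        exact (badB N (N - m) (by omega) (by omega) (by omega) hlow (by omega) hK2).elim
end

section
/- Let n ≥ 4 and 3 ≤ k ≤ n−1. In S_n, let S = {(i i+1) : 1 ≤ i ≤ n−1} be the simple transpositions, I = {(i i+1) : 2 ≤ i ≤ n−1}, J = {(i i+1) : 1 ≤ i ≤ n−2}, and w_k = (1 2 ⋯ k). Then J ∩ {w_k σ w_k⁻¹ : σ ∈ I} = S ∖ {(1 2), (2 3), (k k+1), (n−1 n)}. -/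
/-- The set `S = {(i i+1) : 1 ≤ i ≤ n−1}` of all simple transpositions of
`S_n`; in `0`-indexed terms on `Fin n` these are the swaps `(a, a+1)`. -/
def Sset (n : ℕ) : Set (Equiv.Perm (Fin n)) :=
  {σ | ∃ a b : Fin n, (b : ℕ) = (a : ℕ) + 1 ∧ σ = Equiv.swap a b}

/-- The set `J = {(i i+1) : 1 ≤ i ≤ n−2}`; in `0`-indexed terms the swaps
`(a, a+1)` with `a + 1 ≤ n − 2`. -/
def Jset (n : ℕ) : Set (Equiv.Perm (Fin n)) :=
  {σ | ∃ a b : Fin n, (b : ℕ) = (a : ℕ) + 1 ∧ (b : ℕ) ≤ n - 2 ∧ σ = Equiv.swap a b}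

lemma cr_val {n : ℕ} (i j : Fin n) :
    ((Fin.cycleRange i j : Fin n) : ℕ) =
      if (j : ℕ) < (i : ℕ) then (j : ℕ) + 1
      else if (j : ℕ) = (i : ℕ) then 0 else (j : ℕ) := by
  match n with
  | 0 => exact j.elim0
  | n+1 =>
    rcases lt_trichotomy j i with h | h | h
    · rw [Fin.coe_cycleRange_of_lt h]
      simp [Fin.lt_def.mp h]
    · subst h
      rw [Fin.cycleRange_self, if_neg (lt_irrefl _), if_pos rfl, Fin.val_zero]
    · rw [Fin.cycleRange_of_gt h, if_neg (by exact Nat.not_lt.2 (le_of_lt h)),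
        if_neg (by exact Nat.ne_of_gt h)]

lemma swap_eq_swap_cases {α : Type*} [DecidableEq α] {a b c d : α} (hab : a ≠ b)
    (h : Equiv.swap a b = Equiv.swap c d) : (a = c ∧ b = d) ∨ (a = d ∧ b = c) := by
  have h1 : Equiv.swap c d a = b := by rw [← h, Equiv.swap_apply_left]
  rcases eq_or_ne a c with rfl | hac
  · left; rw [Equiv.swap_apply_left] at h1; exact ⟨rfl, h1.symm⟩
  · rcases eq_or_ne a d with rfl | had
    · right; rw [Equiv.swap_apply_right] at h1; exact ⟨rfl, h1.symm⟩
    · rw [Equiv.swap_apply_of_ne_of_ne hac had] at h1; exact absurd h1 hab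

/-- Let `n ≥ 4` and `3 ≤ k ≤ n−1`.  With
`S = {(i i+1) : 1 ≤ i ≤ n−1}`, `I = {(i i+1) : 2 ≤ i ≤ n−1}`,
`J = {(i i+1) : 1 ≤ i ≤ n−2}` and `w_k = (1 2 ⋯ k)` (0-indexed:
`Fin.cycleRange kk` with `kk = k − 1`), one has
`J ∩ {w_k σ w_k⁻¹ : σ ∈ I} = S ∖ {(1 2), (2 3), (k k+1), (n−1 n)}`
(0-indexed: removed are the swaps `(a, a+1)` with `a ∈ {0, 1, k−1, n−2}`). -/
theorem intersection_of_types_gln_one_nminusone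
    (n k : ℕ) (hn : 4 ≤ n) (hk3 : 3 ≤ k) (hkn : k ≤ n - 1)
    (kk : Fin n) (hkk : (kk : ℕ) = k - 1) :
    Jset n ∩ ((fun σ => Fin.cycleRange kk * σ * (Fin.cycleRange kk)⁻¹) '' Iset n) =
      Sset n \ {σ | ∃ a b : Fin n, (b : ℕ) = (a : ℕ) + 1 ∧
        ((a : ℕ) = 0 ∨ (a : ℕ) = 1 ∨ (a : ℕ) = k - 1 ∨ (a : ℕ) = n - 2) ∧
        σ = Equiv.swap a b} := by
  set w := Fin.cycleRange kk with hw
  have hkk2 : 2 ≤ (kk : ℕ) := by omega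
  have hkkn : (kk : ℕ) ≤ n - 2 := by omega
  ext σ
  simp only [Set.mem_inter_iff, Set.mem_image, Set.mem_diff, Set.mem_setOf_eq,
    Jset, Iset, Sset]
  constructor
  · rintro ⟨⟨a, b, hb, hbn, rfl⟩, τ, ⟨c, d, hd, hc1, rfl⟩, hconj⟩
    have hconj' : Equiv.swap (w c) (w d) = Equiv.swap a b := by
      rw [Equiv.swap_apply_apply]; exact hconj
    have hwc := cr_val kk c
    have hwd := cr_val kk d
    have hcd : w c ≠ w d := by
      intro h
      have := Equiv.injective w h
      apply_fun Fin.val at this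
      omega
    have hcase := swap_eq_swap_cases hcd hconj'
    have hval : ((w c : Fin n) : ℕ) = (a : ℕ) ∧ ((w d : Fin n) : ℕ) = (b : ℕ) ∨
        ((w c : Fin n) : ℕ) = (b : ℕ) ∧ ((w d : Fin n) : ℕ) = (a : ℕ) := by
      rcases hcase with ⟨h1, h2⟩ | ⟨h1, h2⟩
      · exact Or.inl ⟨congrArg Fin.val h1, congrArg Fin.val h2⟩
      · exact Or.inr ⟨congrArg Fin.val h1, congrArg Fin.val h2⟩
    refine ⟨⟨a, b, hb, rfl⟩, ?_⟩
    rintro ⟨a', b', hb', hmem, heq⟩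
    have hab : a ≠ b := by
      intro h; apply_fun Fin.val at h; omega
    have hcase2 := swap_eq_swap_cases hab heq
    have ha' : (a : ℕ) = (a' : ℕ) := by
      rcases hcase2 with ⟨h1, _⟩ | ⟨h1, h2⟩
      · exact congrArg Fin.val h1
      · have := congrArg Fin.val h1
        have := congrArg Fin.val h2
        omega
    rw [hwc, hwd] at hval
    split_ifs at hval <;> omega
  · rintro ⟨⟨a, b, hb, rfl⟩, hnot⟩
    have hmem : ¬ ((a : ℕ) = 0 ∨ (a : ℕ) = 1 ∨ (a : ℕ) = k - 1 ∨ (a : ℕ) = n - 2) :=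
      fun h => hnot ⟨a, b, hb, h, rfl⟩
    have han : (a : ℕ) < n := a.isLt
    have hbn : (b : ℕ) < n := b.isLt
    refine ⟨⟨a, b, hb, by omega, rfl⟩, ?_⟩
    rcases lt_or_gt_of_ne (show (a : ℕ) ≠ (kk : ℕ) by omega) with hlt | hgt
    · -- a < kk : take c = a - 1, d = a (as naturals)
      refine ⟨Equiv.swap ⟨(a : ℕ) - 1, by omega⟩ a, ⟨⟨(a : ℕ) - 1, by omega⟩, a, by simp; omega,
        by simp; omega, rfl⟩, ?_⟩
      rw [← Equiv.swap_apply_apply]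
      have h1 : w ⟨(a : ℕ) - 1, by omega⟩ = a := by
        apply Fin.ext
        rw [cr_val]
        split_ifs <;> simp_all <;> omega
      have h2 : w a = b := by
        apply Fin.ext
        rw [cr_val]
        split_ifs <;> omega
      rw [h1, h2]
    · -- a > kk : take c = a, d = b
      refine ⟨Equiv.swap a b, ⟨a, b, hb, by omega, rfl⟩, ?_⟩
      rw [← Equiv.swap_apply_apply]
      have h1 : w a = a := by
        apply Fin.ext; rw [cr_val]; split_ifs <;> omega
      have h2 : w b = b := by
        apply Fin.ext; rw [cr_val]; split_ifs <;> omega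
      rw [h1, h2]
end

section
/- Let q be a power of a prime p, F̄ an algebraic closure of F_p, n ≥ 4 and 3 ≤ k ≤ n. Let H ⊆ GL_n(F̄) be the subgroup of block-diagonal matrices h = diag(a₁, a₂, A, a_k, a_{k+1}, …, a_n) with a₁, a₂, a_k, …, a_n ∈ F̄ˣ and A ∈ GL_{k−3}(F̄) (blocks of sizes 1, 1, k−3, 1, …, 1 along the diagonal), and let P ∈ GL_n(F̄) be the permutation matrix of the cycle (n n−1 ⋯ k+1 k) (sending n↦n−1↦⋯↦k↦n). Then the group Π = {h ∈ H : h = (P h P⁻¹)^{(q)}} is isomorphic to F_qˣ × F_qˣ × GL_{k−3}(F_q) × F_{q^{n−k+1}}ˣ. -/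
open Matrix

/-- The block index of a position `i ∈ Fin n` for the block structure
`(1, 1, k−3, 1, …, 1)`: positions `0` and `1` (0-indexed) are singleton
blocks, positions `2, …, k−2` form the block of size `k−3`, and each
position `≥ k−1` is a singleton block. -/
def blockIndex (n k : ℕ) (i : Fin n) : ℕ :=
  if (i : ℕ) ≤ 1 then (i : ℕ) else if (i : ℕ) ≤ k - 2 then 2 else (i : ℕ)

/-!
An element `h` of `Π` is block diagonal, so it is determined by its entries `a = h₀₀`, `b = h₁₁`,
its middle block `A` and its diagonal entries at the positions `≥ k - 1`. Since `P h P⁻¹` is `h`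
with rows and columns permuted by `c⁻¹`, the condition `h = (P h P⁻¹)^{(q)}` says
`h (c i) (c j) = (h i j)^q`. The permutation `c` fixes the first `k - 1` positions, so `a`, `b` and
the entries of `A` lie in `F_q`; on the last `n - k + 1` positions it is a single cycle, so the
diagonal there is `d, d^{q^{n-k}}, …, d^{q²}, d^q` with `d = h_{k-1,k-1}`, and going once around the
cycle gives `d^{q^{n-k+1}} = d`. Conversely every such datum `(a, b, A, d)` with `a, b, d ≠ 0` and
`A` invertible gives an element of `Π`, and products are computed blockwise. Finally, the fixed
field of `x ↦ x^{p^s}` in `F̄` consists of the `p^s` roots of `X^{p^s} - X`, so it is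
`GaloisField p s`.
-/

theorem pow_pow_mod {M : Type*} [Monoid M] {d : M} {q r : ℕ} (hd : d ^ q ^ r = d) (s : ℕ) :
    d ^ q ^ (s % r) = d ^ q ^ s := by
  conv_rhs => rw [← Nat.div_add_mod s r]
  induction s / r with
  | zero => rw [mul_zero, zero_add]
  | succ t ih => rw [mul_add_one, add_comm _ r, add_assoc, pow_add, pow_mul, hd, ih]

namespace Matrix

theorem isUnit_of_isUnit_map {κ K L : Type*} [Fintype κ] [DecidableEq κ] [Field K]
    [Field L] (f : K →+* L) {B : Matrix κ κ K} (h : IsUnit (B.map f)) : IsUnit B := by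
  rw [isUnit_iff_isUnit_det, isUnit_iff_ne_zero] at h ⊢
  rwa [← RingHom.mapMatrix_apply, ← RingHom.map_det, map_ne_zero] at h

section BlockDiagonal

variable {ι κ β R : Type*} [Fintype ι] [CommRing R]

def IsBlockDiagonal (f : ι → β) (M : Matrix ι ι R) : Prop :=
  ∀ i j, f i ≠ f j → M i j = 0

variable {f : ι → β} {M N : Matrix ι ι R}

theorem IsBlockDiagonal.mul (hM : IsBlockDiagonal f M) (hN : IsBlockDiagonal f N) :
    IsBlockDiagonal f (M * N) := by
  intro i j hij
  refine Finset.sum_eq_zero fun l _ => ?_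
  by_cases hil : f i = f l
  · exact mul_eq_zero_of_right _ (hN l j (hil ▸ hij))
  · exact mul_eq_zero_of_left (hM i l hil) _

theorem IsBlockDiagonal.submatrix_mul [Fintype κ] (hM : IsBlockDiagonal f M) {e : κ → ι}
    (he : Function.Injective e) (hblock : ∀ u l, f (e u) = f l → l ∈ Set.range e) :
    (M * N).submatrix e e = M.submatrix e e * N.submatrix e e := by
  ext u v
  refine (Fintype.sum_of_injective e he _ _ (fun l hl => ?_) fun _ => rfl).symm
  exact mul_eq_zero_of_left (hM _ _ fun h => hl (hblock u l h)) _

theorem IsBlockDiagonal.mul_apply_self (hM : IsBlockDiagonal f M) {i : ι}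
    (hi : ∀ l, f i = f l → l = i) : (M * N) i i = M i i * N i i := by
  simpa [mul_apply] using congrFun (congrFun
    (hM.submatrix_mul (N := N) (e := fun _ : Unit => i) (fun _ _ _ => rfl)
      fun _ l h => ⟨(), (hi l h).symm⟩) ()) ()

theorem IsBlockDiagonal.isUnit_submatrix [Fintype κ] [DecidableEq ι] [DecidableEq κ]
    (hM : IsBlockDiagonal f M) (hunit : IsUnit M) {e : κ → ι}
    (he : Function.Injective e) (hblock : ∀ u l, f (e u) = f l → l ∈ Set.range e) :
    IsUnit (M.submatrix e e) := by
  obtain ⟨N, hMN⟩ := hunit.exists_right_inv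
  have := hM.submatrix_mul (N := N) he hblock
  rw [hMN, submatrix_one e he] at this
  exact (isUnit_iff_isUnit_det _).mpr (isUnit_det_of_right_inverse this.symm)

theorem IsBlockDiagonal.isUnit_apply_self [DecidableEq ι] (hM : IsBlockDiagonal f M)
    (hunit : IsUnit M) {i : ι} (hi : ∀ l, f i = f l → l = i) : IsUnit (M i i) := by
  simpa [det_unique] using (isUnit_iff_isUnit_det _).mp
    (hM.isUnit_submatrix hunit (e := fun _ : Unit => i) (fun _ _ _ => rfl)
      fun _ l h => ⟨(), (hi l h).symm⟩)

end BlockDiagonal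

section TwistFixed

variable {ι R : Type*} [CommRing R]

def IsTwistFixed (c : Equiv.Perm ι) (q : ℕ) (M : Matrix ι ι R) : Prop :=
  ∀ i j, M (c i) (c j) = M i j ^ q

variable {c : Equiv.Perm ι} {q : ℕ} {M : Matrix ι ι R}

theorem eq_map_conj_permMatrix_iff_isTwistFixed [Fintype ι] [DecidableEq ι] :
    M = ((c⁻¹).permMatrix R * M * ((c⁻¹).permMatrix R)⁻¹).map (· ^ q) ↔
      IsTwistFixed c q M := by
  have hinv : ((c⁻¹).permMatrix R)⁻¹ = c.permMatrix R := by
    refine inv_eq_left_inv ?_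
    rw [← permMatrix_mul, inv_mul_cancel, permMatrix_one]
  rw [hinv, PEquiv.toMatrix_toPEquiv_mul, PEquiv.mul_toMatrix_toPEquiv]
  constructor
  · intro h i j
    conv_lhs => rw [h]
    simp
  · intro h
    ext i j
    simpa using h (c⁻¹ i) (c⁻¹ j)

theorem IsTwistFixed.iterate (hM : IsTwistFixed c q M) (s : ℕ) (i j : ι) :
    M ((c^[s]) i) ((c^[s]) j) = M i j ^ q ^ s := by
  induction s with
  | zero => simp
  | succ s ih => rw [Function.iterate_succ_apply', Function.iterate_succ_apply', hM, ih,
      ← pow_mul, ← pow_succ]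

end TwistFixed

end Matrix

theorem Subfield.exists_units_val_eq {F : Type*} [Field F] (S : Subfield F) {x : F} (hx : x ∈ S)
    (hu : IsUnit x) : ∃ u : Sˣ, ((u : S) : F) = x :=
  ⟨Units.mk0 ⟨x, hx⟩ fun h => hu.ne_zero (congrArg Subtype.val h), rfl⟩

theorem Subfield.exists_units_map_subtype_eq {κ F : Type*} [Fintype κ] [DecidableEq κ] [Field F]
    (S : Subfield F) {A : Matrix κ κ F} (hA : ∀ i j, A i j ∈ S) (hu : IsUnit A) :
    ∃ U : (Matrix κ κ S)ˣ, (U : Matrix κ κ S).map S.subtype = A :=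
  ⟨(isUnit_of_isUnit_map S.subtype (B := fun i j => ⟨A i j, hA i j⟩) hu).unit, rfl⟩

noncomputable def fixedSubfield (p : ℕ) [Fact p.Prime] (s : ℕ) : Subfield (Fbar p) :=
  (iterateFrobenius (Fbar p) p s).eqLocusField (RingHom.id _)

theorem mem_fixedSubfield {p : ℕ} [Fact p.Prime] {s : ℕ} {x : Fbar p} :
    x ∈ fixedSubfield p s ↔ x ^ p ^ s = x := Iff.rfl

open Polynomial in
theorem card_fixedSubfield (p : ℕ) [Fact p.Prime] {s : ℕ} (hs : s ≠ 0) :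
    Nat.card (fixedSubfield p s) = p ^ s := by
  have hp : p.Prime := Fact.out
  let f : (ZMod p)[X] := X ^ p ^ s - X
  have hdeg : f.natDegree = p ^ s :=
    FiniteField.X_pow_card_pow_sub_X_natDegree_eq _ hs hp.one_lt
  have hroots (x : Fbar p) : x ∈ f.rootSet (Fbar p) ↔ x ∈ fixedSubfield p s := by
    simp [f, mem_rootSet, mem_fixedSubfield, sub_eq_zero,
      FiniteField.X_pow_card_pow_sub_X_ne_zero _ hs hp.one_lt]
  have hsplit : (f.map (algebraMap (ZMod p) (Fbar p))).Splits := IsAlgClosed.splits _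
  rw [← hdeg, ← card_rootSet_eq_natDegree (galois_poly_separable p _ (dvd_pow_self p hs)) hsplit,
    ← Nat.card_eq_fintype_card]
  exact Nat.card_congr (Equiv.subtypeEquivRight hroots).symm

noncomputable def fixedSubfieldEquivGaloisField (p : ℕ) [Fact p.Prime] {s : ℕ} (hs : s ≠ 0) :
    fixedSubfield p s ≃+* GaloisField p s :=
  letI : Algebra (ZMod p) (fixedSubfield p s) := ZMod.algebra _ p
  (GaloisField.algEquivGaloisField p s (card_fixedSubfield p hs)).toRingEquiv

/-- With `0`-based positions, `c` fixes `0, …, k - 2` and is the cycle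
`k - 1 ↦ n - 1 ↦ n - 2 ↦ ⋯ ↦ k ↦ k - 1`, the paper's `(n n−1 ⋯ k)`. -/
def IsTailCycle (n k : ℕ) (c : Equiv.Perm (Fin n)) : Prop :=
  ∀ i : Fin n, (c i : ℕ) =
    if (i : ℕ) < k - 1 then (i : ℕ) else if (i : ℕ) = k - 1 then n - 1 else (i : ℕ) - 1

namespace IsTailCycle

variable {n k : ℕ} {c : Equiv.Perm (Fin n)}

theorem apply_of_lt (hc : IsTailCycle n k c) {i : Fin n} (hi : (i : ℕ) < k - 1) : c i = i :=
  Fin.ext (by rw [hc, if_pos hi])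

theorem le_apply_iff (hc : IsTailCycle n k c) (i : Fin n) :
    k - 1 ≤ (c i : ℕ) ↔ k - 1 ≤ (i : ℕ) := by
  rw [hc]; split_ifs <;> omega

theorem iterate_apply (hc : IsTailCycle n k c) (hk : 1 ≤ k) {x : Fin n} (hx : (x : ℕ) = k - 1)
    {s : ℕ} (hs0 : 0 < s) (hs : s ≤ n - k + 1) : ((c^[s] x : Fin n) : ℕ) = n - s := by
  induction s with
  | zero => omega
  | succ s ih =>
    rw [Function.iterate_succ_apply', hc]
    rcases Nat.eq_zero_or_pos s with rfl | hs0'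
    · simp [hx]
    · rw [ih hs0' (by omega)]
      split_ifs <;> omega

theorem iterate_period (hc : IsTailCycle n k c) (hk : 1 ≤ k) (hkn : k ≤ n) {x : Fin n}
    (hx : (x : ℕ) = k - 1) : c^[n - k + 1] x = x :=
  Fin.ext (by rw [hc.iterate_apply hk hx (by omega) le_rfl, hx]; omega)

theorem iterate_mod_apply (hc : IsTailCycle n k c) (hk : 1 ≤ k) (hkn : k ≤ n) {x : Fin n}
    (hx : (x : ℕ) = k - 1) {i : Fin n} (hi : k - 1 ≤ (i : ℕ)) :
    c^[(n - i) % (n - k + 1)] x = i := by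
  rcases hi.eq_or_lt with hi | hi
  · rw [← hi, show n - (k - 1) = n - k + 1 by omega, Nat.mod_self, Function.iterate_zero_apply]
    exact Fin.ext (hx.trans hi)
  · rw [Nat.mod_eq_of_lt (by omega)]
    exact Fin.ext (by rw [hc.iterate_apply hk hx (by omega) (by omega)]; omega)

end IsTailCycle

section MiddleBlock

variable {n k : ℕ}

def midEmb (hkn : k ≤ n) (u : Fin (k - 3)) : Fin n := ⟨u + 2, by omega⟩

theorem val_midEmb (hkn : k ≤ n) (u : Fin (k - 3)) : (midEmb hkn u : ℕ) = u + 2 := rfl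

theorem midEmb_injective (hkn : k ≤ n) : Function.Injective (midEmb hkn) :=
  fun u v h => Fin.ext (by simpa [midEmb] using h)

theorem mem_range_midEmb (hkn : k ≤ n) {l : Fin n} :
    l ∈ Set.range (midEmb hkn) ↔ 2 ≤ (l : ℕ) ∧ (l : ℕ) ≤ k - 2 := by
  constructor
  · rintro ⟨u, rfl⟩
    rw [val_midEmb]; omega
  · intro hl
    exact ⟨⟨l - 2, by omega⟩, Fin.ext (by simp only [val_midEmb]; omega)⟩

theorem mem_range_midEmb_of_blockIndex_eq (hkn : k ≤ n) (u : Fin (k - 3)) (l : Fin n)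
    (h : blockIndex n k (midEmb hkn u) = blockIndex n k l) : l ∈ Set.range (midEmb hkn) := by
  have hu := u.isLt
  have h2 : blockIndex n k (midEmb hkn u) = 2 := by
    rw [blockIndex, val_midEmb, if_neg (by omega), if_pos (by omega)]
  rw [h2, blockIndex] at h
  rw [mem_range_midEmb]
  split_ifs at h <;> omega

theorem eq_of_blockIndex_eq (hkn : k ≤ n) {i l : Fin n} (hi : i ∉ Set.range (midEmb hkn))
    (h : blockIndex n k i = blockIndex n k l) : l = i := by
  rw [mem_range_midEmb] at hi
  simp only [blockIndex] at h
  exact Fin.ext (by split_ifs at h <;> omega)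

theorem blockIndex_ne_of_le {i j : Fin n} (hij : i ≠ j) (h : k - 1 ≤ (i : ℕ) ∨ k - 1 ≤ (j : ℕ)) :
    blockIndex n k i ≠ blockIndex n k j := by
  have := Fin.val_ne_of_ne hij
  unfold blockIndex
  split_ifs <;> omega

end MiddleBlock

section BlockMatrix

variable {R : Type*} [CommRing R] (n k : ℕ) {q : ℕ}

/-- Position `n - s` of the cyclic tail carries `d^{q^s}`, as forced by `IsTwistFixed`. -/
def blockMatrix (q : ℕ) (a b : R) (A : Matrix (Fin (k - 3)) (Fin (k - 3)) R) (d : R) :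
    Matrix (Fin n) (Fin n) R := fun i j =>
  if (i : ℕ) = 0 ∧ (j : ℕ) = 0 then a
  else if (i : ℕ) = 1 ∧ (j : ℕ) = 1 then b
  else if h : 2 ≤ (i : ℕ) ∧ (i : ℕ) ≤ k - 2 ∧ 2 ≤ (j : ℕ) ∧ (j : ℕ) ≤ k - 2 then
    A ⟨(i : ℕ) - 2, by omega⟩ ⟨(j : ℕ) - 2, by omega⟩
  else if i = j ∧ k - 1 ≤ (i : ℕ) then d ^ q ^ ((n - i) % (n - k + 1))
  else 0

variable {n k} {a b d : R} {A : Matrix (Fin (k - 3)) (Fin (k - 3)) R}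

theorem blockMatrix_isBlockDiagonal :
    IsBlockDiagonal (blockIndex n k) (blockMatrix n k q a b A d) := by
  intro i j hij
  simp only [blockIndex] at hij
  simp only [blockMatrix]
  split_ifs at hij ⊢ <;> first | rfl | omega

theorem blockMatrix_apply_of_val_eq_zero {i : Fin n} (hi : (i : ℕ) = 0) :
    blockMatrix n k q a b A d i i = a := by
  simp [blockMatrix, hi]

theorem blockMatrix_apply_of_val_eq_one {i : Fin n} (hi : (i : ℕ) = 1) :
    blockMatrix n k q a b A d i i = b := by
  simp [blockMatrix, hi]

theorem blockMatrix_apply_self_of_le (hk : 3 ≤ k) {i : Fin n} (hi : k - 1 ≤ (i : ℕ)) :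
    blockMatrix n k q a b A d i i = d ^ q ^ ((n - i) % (n - k + 1)) := by
  unfold blockMatrix
  rw [if_neg (by omega), if_neg (by omega), dif_neg (by omega), if_pos ⟨rfl, hi⟩]

theorem blockMatrix_apply_midEmb (hkn : k ≤ n) (u v : Fin (k - 3)) :
    blockMatrix n k q a b A d (midEmb hkn u) (midEmb hkn v) = A u v := by
  have hu := u.isLt
  have hv := v.isLt
  rw [blockMatrix, if_neg (by rw [val_midEmb]; omega),
    if_neg (by rw [val_midEmb]; omega), dif_pos (by simp only [val_midEmb]; omega)]
  simp [val_midEmb]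

theorem blockMatrix_submatrix_midEmb (hkn : k ≤ n) :
    (blockMatrix n k q a b A d).submatrix (midEmb hkn) (midEmb hkn) = A :=
  Matrix.ext (blockMatrix_apply_midEmb (a := a) (b := b) hkn)

theorem blockMatrix_one : blockMatrix n k q (1 : R) 1 1 1 = 1 := by
  ext i j
  unfold blockMatrix
  rw [one_apply]
  split_ifs <;> simp_all [one_apply, Fin.ext_iff] <;> omega

theorem blockMatrix_mul (hkn : k ≤ n) (a' b' d' : R) (A' : Matrix (Fin (k - 3)) (Fin (k - 3)) R) :
    blockMatrix n k q a b A d * blockMatrix n k q a' b' A' d' =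
      blockMatrix n k q (a * a') (b * b') (A * A') (d * d') := by
  have hM : IsBlockDiagonal (blockIndex n k) (blockMatrix n k q a b A d) :=
    blockMatrix_isBlockDiagonal
  ext i j
  by_cases hij : blockIndex n k i = blockIndex n k j
  swap
  · rw [hM.mul blockMatrix_isBlockDiagonal i j hij, blockMatrix_isBlockDiagonal i j hij]
  by_cases hi : i ∈ Set.range (midEmb hkn)
  · obtain ⟨u, rfl⟩ := hi
    obtain ⟨v, rfl⟩ := mem_range_midEmb_of_blockIndex_eq hkn u j hij
    have := congrFun₂ (hM.submatrix_mul (N := blockMatrix n k q a' b' A' d')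
      (midEmb_injective hkn) (mem_range_midEmb_of_blockIndex_eq hkn)) u v
    simp only [blockMatrix_submatrix_midEmb, submatrix_apply] at this
    rw [this, blockMatrix_apply_midEmb]
  · have hji := eq_of_blockIndex_eq hkn hi hij
    subst j
    rw [hM.mul_apply_self fun _ => eq_of_blockIndex_eq hkn hi]
    rw [mem_range_midEmb] at hi
    unfold blockMatrix
    split_ifs <;> first | rfl | omega | simp [mul_pow]

theorem blockMatrix_isTwistFixed (hk : 3 ≤ k) {c : Equiv.Perm (Fin n)} (hc : IsTailCycle n k c)
    (hq : q ≠ 0) (ha : a ^ q = a) (hb : b ^ q = b) (hA : ∀ u v, A u v ^ q = A u v)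
    (hd : d ^ q ^ (n - k + 1) = d) : IsTwistFixed c q (blockMatrix n k q a b A d) := by
  intro i j
  by_cases hlow : (i : ℕ) < k - 1 ∧ (j : ℕ) < k - 1
  · rw [hc.apply_of_lt hlow.1, hc.apply_of_lt hlow.2]
    unfold blockMatrix
    split_ifs <;> first | omega | simp [ha, hb, hA, zero_pow hq]
  by_cases hij : i = j
  swap
  · rw [blockMatrix_isBlockDiagonal _ _ (blockIndex_ne_of_le (c.injective.ne hij) ?_),
      blockMatrix_isBlockDiagonal i j (blockIndex_ne_of_le hij (by omega)), zero_pow hq]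
    rw [hc.le_apply_iff, hc.le_apply_iff]
    omega
  subst hij
  have hi : k - 1 ≤ (i : ℕ) := by omega
  rw [blockMatrix_apply_self_of_le hk ((hc.le_apply_iff i).mpr hi),
    blockMatrix_apply_self_of_le hk hi,
    ← pow_mul, ← pow_succ, ← pow_pow_mod hd (_ + 1), Nat.mod_add_mod]
  -- `n - c i ≡ (n - i) + 1` modulo the length `n - k + 1` of the cycle
  have hci := hc i
  split_ifs at hci with h₁ h₂
  · omega
  · rw [hci, h₂, show n - (k - 1) + 1 = 1 + (n - k + 1) by omega, Nat.add_mod_right,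
      show n - (n - 1) = 1 by omega]
  · rw [hci, show n - (i - 1) = n - i + 1 by omega]

variable (n k q) in
def blockMatrixHom (hkn : k ≤ n) :
    R × R × Matrix (Fin (k - 3)) (Fin (k - 3)) R × R →* Matrix (Fin n) (Fin n) R where
  toFun x := blockMatrix n k q x.1 x.2.1 x.2.2.1 x.2.2.2
  map_one' := blockMatrix_one
  map_mul' _ _ := (blockMatrix_mul hkn _ _ _ _).symm

def blockEntries (hk : 3 ≤ k) (hkn : k ≤ n) (M : Matrix (Fin n) (Fin n) R) :
    R × R × Matrix (Fin (k - 3)) (Fin (k - 3)) R × R :=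
  (M ⟨0, by omega⟩ ⟨0, by omega⟩, M ⟨1, by omega⟩ ⟨1, by omega⟩,
    M.submatrix (midEmb hkn) (midEmb hkn), M ⟨k - 1, by omega⟩ ⟨k - 1, by omega⟩)

theorem blockEntries_blockMatrixHom (hk : 3 ≤ k) (hkn : k ≤ n)
    (x : R × R × Matrix (Fin (k - 3)) (Fin (k - 3)) R × R) :
    blockEntries hk hkn (blockMatrixHom n k q hkn x) = x := by
  obtain ⟨a, b, A, d⟩ := x
  have hr : (n - (k - 1)) % (n - k + 1) = 0 := by
    rw [show n - (k - 1) = n - k + 1 by omega, Nat.mod_self]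
  simp only [blockEntries, blockMatrixHom, MonoidHom.coe_mk, OneHom.coe_mk, Prod.mk.injEq]
  exact ⟨blockMatrix_apply_of_val_eq_zero rfl, blockMatrix_apply_of_val_eq_one rfl,
    blockMatrix_submatrix_midEmb hkn, by rw [blockMatrix_apply_self_of_le hk le_rfl]; simp [hr]⟩

theorem blockMatrixHom_blockEntries (hk : 3 ≤ k) (hkn : k ≤ n) {c : Equiv.Perm (Fin n)}
    (hc : IsTailCycle n k c) {M : Matrix (Fin n) (Fin n) R}
    (hM : IsBlockDiagonal (blockIndex n k) M) (hT : IsTwistFixed c q M) :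
    blockMatrixHom n k q hkn (blockEntries hk hkn M) = M := by
  ext i j
  simp only [blockMatrixHom, blockEntries, MonoidHom.coe_mk, OneHom.coe_mk]
  by_cases hij : blockIndex n k i = blockIndex n k j
  swap
  · rw [blockMatrix_isBlockDiagonal i j hij, hM i j hij]
  by_cases hi : i ∈ Set.range (midEmb hkn)
  · obtain ⟨u, rfl⟩ := hi
    obtain ⟨v, rfl⟩ := mem_range_midEmb_of_blockIndex_eq hkn u j hij
    exact blockMatrix_apply_midEmb hkn u v
  have hji := eq_of_blockIndex_eq hkn hi hij
  subst j
  rw [mem_range_midEmb] at hi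
  rcases (by omega : (i : ℕ) = 0 ∨ (i : ℕ) = 1 ∨ k - 1 ≤ (i : ℕ)) with h | h | h
  · rw [blockMatrix_apply_of_val_eq_zero h, show i = ⟨0, by omega⟩ from Fin.ext h]
  · rw [blockMatrix_apply_of_val_eq_one h, show i = ⟨1, by omega⟩ from Fin.ext h]
  · rw [blockMatrix_apply_self_of_le hk h, ← hT.iterate,
      hc.iterate_mod_apply (by omega) hkn rfl h]

end BlockMatrix

section Stabilizer

variable (p : ℕ) [Fact p.Prime] (m n k : ℕ)

abbrev BlockUnitGroup : Type :=
  (fixedSubfield p m)ˣ × (fixedSubfield p m)ˣ ×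
    (Matrix (Fin (k - 3)) (Fin (k - 3)) (fixedSubfield p m))ˣ ×
    (fixedSubfield p (m * (n - k + 1)))ˣ

noncomputable def BlockUnitGroup.coeHom :
    BlockUnitGroup p m n k →*
      Fbar p × Fbar p × Matrix (Fin (k - 3)) (Fin (k - 3)) (Fbar p) × Fbar p :=
  let coe (S : Subfield (Fbar p)) : Sˣ →* Fbar p := S.subtype.toMonoidHom.comp (Units.coeHom S)
  let coeMatrix : (Matrix (Fin (k - 3)) (Fin (k - 3)) (fixedSubfield p m))ˣ →*
      Matrix (Fin (k - 3)) (Fin (k - 3)) (Fbar p) :=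
    (fixedSubfield p m).subtype.mapMatrix.toMonoidHom.comp (Units.coeHom _)
  (coe _).prodMap ((coe _).prodMap (coeMatrix.prodMap (coe _)))

theorem BlockUnitGroup.coeHom_injective :
    Function.Injective (BlockUnitGroup.coeHom p m n k) := by
  have hcoe (S : Subfield (Fbar p)) : Function.Injective fun u : Sˣ => ((u : S) : Fbar p) :=
    Subtype.val_injective.comp Units.val_injective
  have hcoeMatrix : Function.Injective
      fun U : (Matrix (Fin (k - 3)) (Fin (k - 3)) (fixedSubfield p m))ˣ =>
        U.val.map Subtype.val :=
    fun U V h => Units.ext (Matrix.map_injective Subtype.val_injective h)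
  exact (hcoe _).prodMap ((hcoe _).prodMap (hcoeMatrix.prodMap (hcoe _)))

noncomputable def BlockUnitGroup.mulEquivGaloisField (hm : m ≠ 0) :
    BlockUnitGroup p m n k ≃* (GaloisField p m)ˣ × (GaloisField p m)ˣ ×
      (Matrix (Fin (k - 3)) (Fin (k - 3)) (GaloisField p m))ˣ ×
      (GaloisField p (m * (n - k + 1)))ˣ :=
  let e := fixedSubfieldEquivGaloisField p hm
  let e' := fixedSubfieldEquivGaloisField p (by positivity : m * (n - k + 1) ≠ 0)
  (Units.mapEquiv e.toMulEquiv).prodCongr ((Units.mapEquiv e.toMulEquiv).prodCongr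
    ((Units.mapEquiv e.mapMatrix.toMulEquiv).prodCongr (Units.mapEquiv e'.toMulEquiv)))

variable {n k}

noncomputable def blockUnitHom (hkn : k ≤ n) :
    BlockUnitGroup p m n k →* (Matrix (Fin n) (Fin n) (Fbar p))ˣ :=
  ((blockMatrixHom n k (p ^ m) hkn).comp (BlockUnitGroup.coeHom p m n k)).toHomUnits

theorem blockUnitHom_injective (hk : 3 ≤ k) (hkn : k ≤ n) :
    Function.Injective (blockUnitHom p m hkn) := by
  intro g g' h
  apply BlockUnitGroup.coeHom_injective
  rw [← blockEntries_blockMatrixHom (q := p ^ m) hk hkn (BlockUnitGroup.coeHom p m n k g),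
    ← blockEntries_blockMatrixHom (q := p ^ m) hk hkn (BlockUnitGroup.coeHom p m n k g')]
  exact congrArg (blockEntries hk hkn ∘ Units.val) h

theorem exists_coeHom_eq_blockEntries (hk : 3 ≤ k) (hkn : k ≤ n) {c : Equiv.Perm (Fin n)}
    (hc : IsTailCycle n k c) {M : Matrix (Fin n) (Fin n) (Fbar p)} (hunit : IsUnit M)
    (hM : IsBlockDiagonal (blockIndex n k) M) (hT : IsTwistFixed c (p ^ m) M) :
    ∃ g, BlockUnitGroup.coeHom p m n k g = blockEntries hk hkn M := by
  have hfix {i j : Fin n} (hi : (i : ℕ) < k - 1) (hj : (j : ℕ) < k - 1) :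
      M i j ∈ fixedSubfield p m := by
    rw [mem_fixedSubfield, ← hT, hc.apply_of_lt hi, hc.apply_of_lt hj]
  have hunit_apply {i : Fin n} (hi : ¬(2 ≤ (i : ℕ) ∧ (i : ℕ) ≤ k - 2)) : IsUnit (M i i) :=
    hM.isUnit_apply_self hunit fun _ =>
      eq_of_blockIndex_eq hkn ((mem_range_midEmb hkn).not.mpr hi)
  have hperiod : M ⟨k - 1, by omega⟩ ⟨k - 1, by omega⟩ ∈ fixedSubfield p (m * (n - k + 1)) := by
    rw [mem_fixedSubfield, pow_mul, ← hT.iterate, hc.iterate_period (by omega) hkn rfl]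
  obtain ⟨a, ha⟩ := (fixedSubfield p m).exists_units_val_eq
    (hfix (i := ⟨0, by omega⟩) (j := ⟨0, by omega⟩) (by show 0 < k - 1; omega)
      (by show 0 < k - 1; omega)) (hunit_apply (by simp))
  obtain ⟨b, hb⟩ := (fixedSubfield p m).exists_units_val_eq
    (hfix (i := ⟨1, by omega⟩) (j := ⟨1, by omega⟩) (by show 1 < k - 1; omega)
      (by show 1 < k - 1; omega)) (hunit_apply (by simp))
  obtain ⟨A, hA⟩ := (fixedSubfield p m).exists_units_map_subtype_eq
    (fun u v => hfix (by rw [val_midEmb]; omega) (by rw [val_midEmb]; omega))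
    (hM.isUnit_submatrix hunit (midEmb_injective hkn) (mem_range_midEmb_of_blockIndex_eq hkn))
  obtain ⟨d, hd⟩ := (fixedSubfield p (m * (n - k + 1))).exists_units_val_eq hperiod
    (hunit_apply (by show ¬(2 ≤ k - 1 ∧ k - 1 ≤ k - 2); omega))
  exact ⟨(a, b, A, d), Prod.ext ha (Prod.ext hb (Prod.ext hA hd))⟩

theorem mem_range_blockUnitHom_iff (hk : 3 ≤ k) (hkn : k ≤ n) {c : Equiv.Perm (Fin n)}
    (hc : IsTailCycle n k c) (h : (Matrix (Fin n) (Fin n) (Fbar p))ˣ) :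
    h ∈ (blockUnitHom p m hkn).range ↔
      IsBlockDiagonal (blockIndex n k) (h : Matrix (Fin n) (Fin n) (Fbar p)) ∧
        IsTwistFixed c (p ^ m) (h : Matrix (Fin n) (Fin n) (Fbar p)) := by
  constructor
  · rintro ⟨⟨a, b, A, d⟩, rfl⟩
    refine ⟨blockMatrix_isBlockDiagonal, blockMatrix_isTwistFixed hk hc
      (pow_ne_zero _ (Fact.out : p.Prime).ne_zero)
      (mem_fixedSubfield.mp (a : fixedSubfield p m).2)
      (mem_fixedSubfield.mp (b : fixedSubfield p m).2)
      (fun u v => mem_fixedSubfield.mp ((A : Matrix _ _ (fixedSubfield p m)) u v).2) ?_⟩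
    rw [← pow_mul]
    exact mem_fixedSubfield.mp (d : fixedSubfield p (m * (n - k + 1))).2
  · rintro ⟨hM, hT⟩
    obtain ⟨g, hg⟩ := exists_coeHom_eq_blockEntries p m hk hkn hc h.isUnit hM hT
    refine ⟨g, Units.ext ?_⟩
    change blockMatrixHom n k (p ^ m) hkn (BlockUnitGroup.coeHom p m n k g) = h
    rw [hg, blockMatrixHom_blockEntries hk hkn hc hM hT]

end Stabilizer

theorem gln_one_nminusone_zip_stabilizer_iso_general
    (p m q : ℕ) [Fact p.Prime] (hm : 1 ≤ m) (hq : q = p ^ m)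
    (n k : ℕ) (hk3 : 3 ≤ k) (hkn : k ≤ n)
    (c : Equiv.Perm (Fin n))
    (hc : ∀ i : Fin n, (c i : ℕ) =
      if (i : ℕ) < k - 1 then (i : ℕ)
      else if (i : ℕ) = k - 1 then n - 1 else (i : ℕ) - 1)
    (P : Matrix (Fin n) (Fin n) (Fbar p))
    (hP : ∀ i j : Fin n, P i j = if i = c j then 1 else 0) :
    ∃ Pi : Subgroup (Matrix (Fin n) (Fin n) (Fbar p))ˣ,
      (Pi : Set (Matrix (Fin n) (Fin n) (Fbar p))ˣ) =
        {h : (Matrix (Fin n) (Fin n) (Fbar p))ˣ |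
          (∀ i j : Fin n, blockIndex n k i ≠ blockIndex n k j →
            (h : Matrix (Fin n) (Fin n) (Fbar p)) i j = 0) ∧
          (h : Matrix (Fin n) (Fin n) (Fbar p)) =
            ((P * (h : Matrix (Fin n) (Fin n) (Fbar p)) * P⁻¹).map fun x => x ^ q)} ∧
      Nonempty (Pi ≃*
        ((GaloisField p m)ˣ × (GaloisField p m)ˣ ×
          (Matrix (Fin (k - 3)) (Fin (k - 3)) (GaloisField p m))ˣ ×
          (GaloisField p (m * (n - k + 1)))ˣ)) := by
  subst hq
  obtain rfl : P = (c⁻¹).permMatrix (Fbar p) := by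
    ext i j
    simp [hP, PEquiv.toMatrix_apply, Equiv.eq_symm_apply, eq_comm]
  refine ⟨(blockUnitHom p m hkn).range, Set.ext fun h => ?_,
    ⟨(MonoidHom.ofInjective (blockUnitHom_injective p m hk3 hkn)).symm.trans
      (BlockUnitGroup.mulEquivGaloisField p m n k (by omega))⟩⟩
  rw [SetLike.mem_coe, mem_range_blockUnitHom_iff p m hk3 hkn hc]
  exact and_congr Iff.rfl eq_map_conj_permMatrix_iff_isTwistFixed.symm

/-- Let `q = p^m` be a prime power, `F̄` an algebraic
closure of `F_p`, `n ≥ 4` and `3 ≤ k ≤ n`.  Let `H ⊆ GL_n(F̄)` be the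
subgroup of block-diagonal matrices for the block structure
`(1, 1, k−3, 1, …, 1)` and let `P` be the permutation matrix of the cycle
`(n n−1 ⋯ k+1 k)` (sending `n ↦ n−1 ↦ ⋯ ↦ k ↦ n`).  Then
`Π = {h ∈ H : h = (P h P⁻¹)^{(q)}}` is a group isomorphic to
`F_qˣ × F_qˣ × GL_{k−3}(F_q) × F_{q^{n−k+1}}ˣ`. -/
theorem gln_one_nminusone_zip_stabilizer_iso
    (p m q : ℕ) [Fact p.Prime] (hm : 1 ≤ m) (hq : q = p ^ m)
    (n k : ℕ) (hn : 4 ≤ n) (hk3 : 3 ≤ k) (hkn : k ≤ n)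
    (c : Equiv.Perm (Fin n))
    (hc : ∀ i : Fin n, (c i : ℕ) =
      if (i : ℕ) < k - 1 then (i : ℕ)
      else if (i : ℕ) = k - 1 then n - 1 else (i : ℕ) - 1)
    (P : Matrix (Fin n) (Fin n) (Fbar p))
    (hP : ∀ i j : Fin n, P i j = if i = c j then 1 else 0) :
    ∃ Pi : Subgroup (Matrix (Fin n) (Fin n) (Fbar p))ˣ,
      (Pi : Set (Matrix (Fin n) (Fin n) (Fbar p))ˣ) =
        {h : (Matrix (Fin n) (Fin n) (Fbar p))ˣ |
          (∀ i j : Fin n, blockIndex n k i ≠ blockIndex n k j →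
            (h : Matrix (Fin n) (Fin n) (Fbar p)) i j = 0) ∧
          (h : Matrix (Fin n) (Fin n) (Fbar p)) =
            ((P * (h : Matrix (Fin n) (Fin n) (Fbar p)) * P⁻¹).map fun x => x ^ q)} ∧
      Nonempty (Pi ≃*
        ((GaloisField p m)ˣ × (GaloisField p m)ˣ ×
          (Matrix (Fin (k - 3)) (Fin (k - 3)) (GaloisField p m))ˣ ×
          (GaloisField p (m * (n - k + 1)))ˣ)) :=
  gln_one_nminusone_zip_stabilizer_iso_general p m q hm hq n k hk3 hkn c hc P hP
end
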